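/- arXiv:2302.03201 — 11 statements merged into one kernel-verified Lean document; each statement's English description precedes it below -/
import Mathlib

section
/- (Acerbi's integral formula) Let X be a random variable with values in [0,1] with CDF F and quantile function F†, and let τ ∈ (0,1]. Then CVaR_τ(X) = sup_{b ∈ [0,1]} (b − τ⁻¹ E[(b − X)⁺]) = τ⁻¹ ∫₀^τ F†(y) dy. -/
/-!
By the layer-cake formula `E[(b - X)⁺] = ∫₀ᵇ F`, so the objective equals `τ⁻¹ ∫₀ᵇ (τ - F)`.
Since `τ - F` is decreasing, this is largest when `b = F†(τ)`, the point where `τ - F` changes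
sign, and its maximum is `τ⁻¹ ∫₀¹ (τ - F)⁺`. Right-continuity of `F` gives the Galois connection
`x < F†(y) ↔ F x < y`, so `∫₀¹ (τ - F)⁺` and `∫₀^τ F†` are the two iterated integrals computing
the area of `{(x, y) ∈ (0,1] × (0,τ] | F x < y}`.
-/

open MeasureTheory ProbabilityTheory Set

/-- Only meaningful for `y ≤ F 1`: otherwise the set is empty and `sInf ∅ = 0`. -/
noncomputable def quantile (F : ℝ → ℝ) (y : ℝ) : ℝ := sInf {x ∈ Icc (0:ℝ) 1 | y ≤ F x}

section Quantile

variable {F : ℝ → ℝ} {x y τ : ℝ}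

lemma quantile_le (hx : x ∈ Icc (0:ℝ) 1) (h : y ≤ F x) : quantile F y ≤ x :=
  csInf_le ⟨0, fun _ hz => hz.1.1⟩ ⟨hx, h⟩

lemma quantile_mem_Icc (hy : y ≤ F 1) : quantile F y ∈ Icc (0:ℝ) 1 :=
  ⟨le_csInf ⟨1, ⟨zero_le_one, le_rfl⟩, hy⟩ fun _ hz => hz.1.1,
    quantile_le ⟨zero_le_one, le_rfl⟩ hy⟩

lemma monotoneOn_quantile : MonotoneOn (quantile F) (Iic (F 1)) := fun _ _ _ hy' hyy' =>
  csInf_le_csInf ⟨0, fun _ hz => hz.1.1⟩ ⟨1, ⟨zero_le_one, le_rfl⟩, hy'⟩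
    fun _ hz => ⟨hz.1, hyy'.trans hz.2⟩

lemma intervalIntegrable_quantile (hτ0 : 0 ≤ τ) (hτ : τ ≤ F 1) :
    IntervalIntegrable (quantile F) volume 0 τ :=
  (monotoneOn_quantile.mono fun _ hy => (uIcc_of_le hτ0 ▸ hy).2.trans hτ).intervalIntegrable

end Quantile

lemma StieltjesFunction.lt_quantile_iff (f : StieltjesFunction ℝ) {x y : ℝ}
    (hx : x ∈ Icc (0:ℝ) 1) (hy : y ≤ f 1) : x < quantile f y ↔ f x < y := by
  refine ⟨fun h => lt_of_not_ge fun hxy => (quantile_le hx hxy).not_gt h, fun h => ?_⟩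
  obtain ⟨u, hxu, hu⟩ := mem_nhdsGE_iff_exists_Ico_subset.1
    (f.right_continuous x (Iio_mem_nhds h))
  refine hxu.trans_le (le_csInf ⟨1, ⟨zero_le_one, le_rfl⟩, hy⟩ fun z hz => ?_)
  by_contra! hzu
  rcases le_or_gt x z with hxz | hzx
  · exact (hu ⟨hxz, hzu⟩ : f z < y).not_ge hz.2
  · exact ((f.mono hzx.le).trans_lt h).not_ge hz.2

section PositivePart

variable {g : ℝ → ℝ} {a b c : ℝ}

lemma intervalIntegral_le_intervalIntegral_max_zero (hg : IntervalIntegrable g volume a c)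
    (hab : a ≤ b) (hbc : b ≤ c) : ∫ x in a..b, g x ≤ ∫ x in a..c, max (g x) 0 := by
  have hsub : uIcc a b ⊆ uIcc a c := uIcc_subset_uIcc_left (mem_uIcc_of_le hab hbc)
  have hg' : IntervalIntegrable (fun x => max (g x) 0) volume a c :=
    ⟨hg.1.pos_part, hg.2.pos_part⟩
  calc ∫ x in a..b, g x ≤ ∫ x in a..b, max (g x) 0 :=
        intervalIntegral.integral_mono_on hab (hg.mono_set hsub) (hg'.mono_set hsub)
          fun x _ => le_max_left _ _
    _ ≤ ∫ x in a..c, max (g x) 0 :=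
        intervalIntegral.integral_mono_interval le_rfl hab hbc
          (ae_of_all _ fun _ => le_max_right _ _) hg'

lemma intervalIntegral_eq_intervalIntegral_max_zero (hg : IntervalIntegrable g volume a c)
    (hab : a ≤ b) (hbc : b ≤ c) (hpos : ∀ x ∈ Ioo a b, 0 ≤ g x)
    (hneg : ∀ x ∈ Ioo b c, g x ≤ 0) :
    ∫ x in a..b, g x = ∫ x in a..c, max (g x) 0 := by
  have hg' : IntervalIntegrable (fun x => max (g x) 0) volume a c :=
    ⟨hg.1.pos_part, hg.2.pos_part⟩
  rw [← intervalIntegral.integral_add_adjacent_intervals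
    (hg'.mono_set (uIcc_subset_uIcc_left (mem_uIcc_of_le hab hbc)))
    (hg'.mono_set (uIcc_subset_uIcc_right (mem_uIcc_of_le hab hbc))),
    intervalIntegral.integral_of_le hab, intervalIntegral.integral_of_le hab,
    intervalIntegral.integral_of_le hbc, integral_Ioc_eq_integral_Ioo,
    integral_Ioc_eq_integral_Ioo, integral_Ioc_eq_integral_Ioo,
    setIntegral_congr_fun measurableSet_Ioo fun x hx => max_eq_left (hpos x hx),
    setIntegral_congr_fun measurableSet_Ioo fun x hx => max_eq_right (hneg x hx)]
  simp

end PositivePart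

lemma integral_max_sub_eq_intervalIntegral_measureReal_le {Ω : Type*} [MeasurableSpace Ω]
    {μ : Measure Ω} [IsFiniteMeasure μ] {X : Ω → ℝ} (hX : AEMeasurable X μ) (hX0 : 0 ≤ᵐ[μ] X)
    {b : ℝ} (hb : 0 ≤ b) :
    ∫ ω, max (b - X ω) 0 ∂μ = ∫ t in (0:ℝ)..b, μ.real {ω | X ω ≤ t} := by
  have hle : ∀ᵐ ω ∂μ, max (b - X ω) 0 ≤ b :=
    hX0.mono fun ω (hω : (0:ℝ) ≤ X ω) => max_le (by linarith) hb
  have hint : Integrable (fun ω => max (b - X ω) 0) μ :=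
    (integrable_const b).mono'
      ((aemeasurable_const.sub hX).max aemeasurable_const).aestronglyMeasurable
      (hle.mono fun ω hω => by rwa [Real.norm_of_nonneg (le_max_right _ _)])
  have hlevel : ∀ t : ℝ, 0 < t → {ω | t ≤ max (b - X ω) 0} = {ω | X ω ≤ b - t} := by
    intro t ht
    ext ω
    simp only [mem_ofPred_eq, le_max_iff, ht.not_ge, or_false]
    constructor <;> intro h <;> linarith
  rw [hint.integral_eq_integral_Ioc_meas_le (ae_of_all _ fun _ => le_max_right _ _) hle,
    ← intervalIntegral.integral_of_le hb]
  calc ∫ t in (0:ℝ)..b, μ.real {ω | t ≤ max (b - X ω) 0}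
      = ∫ t in (0:ℝ)..b, μ.real {ω | X ω ≤ b - t} :=
        intervalIntegral.integral_congr_ae (ae_of_all _ fun t ht => by
          rw [uIoc_of_le hb] at ht; rw [hlevel t ht.1])
    _ = ∫ t in (0:ℝ)..b, μ.real {ω | X ω ≤ t} := by
        rw [intervalIntegral.integral_comp_sub_left (fun t => μ.real {ω | X ω ≤ t}), sub_self,
          sub_zero]

namespace StieltjesFunction

variable (f : StieltjesFunction ℝ) {τ : ℝ}

lemma lintegral_ofReal_sub_eq_lintegral_quantile (hf0 : 0 ≤ f 0) (hτ : τ ≤ f 1) :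
    ∫⁻ x in Ioc 0 1, ENNReal.ofReal (τ - f x) =
      ∫⁻ y in Ioc 0 τ, ENNReal.ofReal (quantile f y) := by
  have hS : MeasurableSet {p : ℝ × ℝ | f p.1 < p.2} :=
    measurableSet_lt (f.mono.measurable.comp measurable_fst) measurable_snd
  have hswap := (Measure.prod_apply (μ := volume.restrict (Ioc (0:ℝ) 1))
    (ν := volume.restrict (Ioc 0 τ)) hS).symm.trans (Measure.prod_apply_symm hS)
  convert hswap using 1
  · refine setLIntegral_congr_fun measurableSet_Ioc fun x hx => ?_
    have hsec : Prod.mk x ⁻¹' {p : ℝ × ℝ | f p.1 < p.2} ∩ Ioc 0 τ = Ioc (f x) τ := by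
      ext y
      simp only [mem_inter_iff, mem_preimage, mem_ofPred_eq, mem_Ioc]
      constructor
      · rintro ⟨h, -, hy⟩; exact ⟨h, hy⟩
      · rintro ⟨h, hy⟩; exact ⟨h, (hf0.trans (f.mono hx.1.le)).trans_lt h, hy⟩
    rw [Measure.restrict_apply (measurable_prodMk_left hS), hsec, Real.volume_Ioc]
  · refine setLIntegral_congr_fun measurableSet_Ioc fun y hy => ?_
    have hy1 : y ≤ f 1 := hy.2.trans hτ
    have hsec : (fun x => (x, y)) ⁻¹' {p : ℝ × ℝ | f p.1 < p.2} ∩ Ioc 0 1 =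
        Ioo 0 (quantile f y) := by
      ext x
      simp only [mem_inter_iff, mem_preimage, mem_ofPred_eq, mem_Ioc, mem_Ioo]
      constructor
      · rintro ⟨h, hx0, hx1⟩; exact ⟨hx0, (f.lt_quantile_iff ⟨hx0.le, hx1⟩ hy1).2 h⟩
      · rintro ⟨hx0, h⟩
        have hx1 : x ≤ 1 := h.le.trans (quantile_mem_Icc hy1).2
        exact ⟨(f.lt_quantile_iff ⟨hx0.le, hx1⟩ hy1).1 h, hx0, hx1⟩
    rw [Measure.restrict_apply (measurable_prodMk_right hS), hsec, Real.volume_Ioo, sub_zero]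

lemma integral_max_sub_eq_integral_quantile (hf0 : 0 ≤ f 0) (hτ0 : 0 ≤ τ) (hτ : τ ≤ f 1) :
    ∫ x in (0:ℝ)..1, max (τ - f x) 0 = ∫ y in (0:ℝ)..τ, quantile f y := by
  have hq0 : ∀ᵐ y ∂volume.restrict (Ioc 0 τ), 0 ≤ quantile f y :=
    (ae_restrict_iff' measurableSet_Ioc).2
      (ae_of_all _ fun y hy => (quantile_mem_Icc (hy.2.trans hτ)).1)
  rw [intervalIntegral.integral_of_le zero_le_one, intervalIntegral.integral_of_le hτ0,
    integral_eq_lintegral_of_nonneg_ae (f := fun x => max (τ - f x) 0)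
      (ae_of_all _ fun _ => le_max_right _ _)
      ((measurable_const.sub f.mono.measurable).max measurable_const).aestronglyMeasurable,
    integral_eq_lintegral_of_nonneg_ae hq0
      (intervalIntegrable_quantile hτ0 hτ).1.aestronglyMeasurable]
  simp only [ENNReal.ofReal_max, ENNReal.ofReal_zero, zero_le, max_eq_left]
  rw [f.lintegral_ofReal_sub_eq_lintegral_quantile hf0 hτ]

lemma integral_sub_to_quantile_eq_integral_max_sub (hτ : τ ≤ f 1) :
    ∫ x in (0:ℝ)..quantile f τ, (τ - f x) = ∫ x in (0:ℝ)..1, max (τ - f x) 0 := by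
  obtain ⟨hq0, hq1⟩ := quantile_mem_Icc hτ
  refine intervalIntegral_eq_intervalIntegral_max_zero
    (intervalIntegrable_const.sub f.mono.intervalIntegrable) hq0 hq1
    (fun x hx => ?_) fun x hx => ?_
  · have := (f.lt_quantile_iff ⟨hx.1.le, hx.2.le.trans hq1⟩ hτ).1 hx.2
    linarith
  · have := (f.lt_quantile_iff ⟨hq0.trans hx.1.le, hx.2.le⟩ hτ).not.1 hx.1.not_gt
    linarith

end StieltjesFunction

lemma sub_inv_mul_integral_max_sub_eq_inv_mul_integral_sub_cdf {Ω : Type*} [MeasurableSpace Ω]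
    (μ : Measure Ω) [IsProbabilityMeasure μ] {X : Ω → ℝ} (hX : Measurable X)
    (hX0 : ∀ ω, 0 ≤ X ω) {b τ : ℝ} (hb : 0 ≤ b) (hτ : τ ≠ 0) :
    b - τ⁻¹ * ∫ ω, max (b - X ω) 0 ∂μ = τ⁻¹ * ∫ x in (0:ℝ)..b, (τ - cdf (μ.map X) x) := by
  have : IsProbabilityMeasure (μ.map X) := Measure.isProbabilityMeasure_map hX.aemeasurable
  have hcdf : (fun t => μ.real {ω | X ω ≤ t}) = cdf (μ.map X) := funext fun t => by
    rw [cdf_eq_real, map_measureReal_apply hX measurableSet_Iic]; rfl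
  rw [integral_max_sub_eq_intervalIntegral_measureReal_le hX.aemeasurable (ae_of_all _ hX0) hb,
    hcdf, intervalIntegral.integral_sub intervalIntegrable_const
      (monotone_cdf _).intervalIntegrable,
    intervalIntegral.integral_const, smul_eq_mul, sub_zero, mul_sub, ← mul_assoc,
    mul_comm τ⁻¹ b, mul_assoc, inv_mul_cancel₀ hτ, mul_one]

/-- Acerbi's integral formula: for `X` with values in `[0,1]`, CDF `F` and quantile
function `F†`, and `τ ∈ (0,1]`,
`CVaR_τ(X) = sup_{b ∈ [0,1]} (b − τ⁻¹ E[(b − X)⁺]) = τ⁻¹ ∫₀^τ F†(y) dy`. -/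
theorem acerbi_integral_formula {Ω : Type*} [MeasurableSpace Ω]
    (μ : Measure Ω) [IsProbabilityMeasure μ]
    (X : Ω → ℝ) (hXmeas : Measurable X) (hX01 : ∀ ω, X ω ∈ Set.Icc (0:ℝ) 1)
    (F : ℝ → ℝ) (hF : ∀ x, F x = (μ {ω | X ω ≤ x}).toReal)
    (Fdag : ℝ → ℝ) (hFdag : ∀ t, Fdag t = sInf {x ∈ Set.Icc (0:ℝ) 1 | t ≤ F x})
    (τ : ℝ) (hτ : τ ∈ Set.Ioc (0:ℝ) 1) :
    sSup ((fun b => b - τ⁻¹ * ∫ ω, max (b - X ω) 0 ∂μ) '' Set.Icc (0:ℝ) 1)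
      = τ⁻¹ * ∫ y in (0:ℝ)..τ, Fdag y := by
  obtain ⟨hτ0, hτ1⟩ := hτ
  have : IsProbabilityMeasure (μ.map X) := Measure.isProbabilityMeasure_map hXmeas.aemeasurable
  have hF1 : F 1 = 1 := by
    rw [hF, show {ω | X ω ≤ 1} = univ from eq_univ_of_forall fun ω => (hX01 ω).2, measure_univ,
      ENNReal.toReal_one]
  obtain rfl : F = cdf (μ.map X) := funext fun x => by
    rw [hF, cdf_eq_real, map_measureReal_apply hXmeas measurableSet_Iic]; rfl
  obtain rfl : Fdag = quantile (cdf (μ.map X)) := funext hFdag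
  have hτF : τ ≤ cdf (μ.map X) 1 := hτ1.trans hF1.ge
  have hobj := fun b (hb : b ∈ Icc (0:ℝ) 1) =>
    sub_inv_mul_integral_max_sub_eq_inv_mul_integral_sub_cdf μ hXmeas (fun ω => (hX01 ω).1)
      hb.1 hτ0.ne'
  rw [← (cdf (μ.map X)).integral_max_sub_eq_integral_quantile (cdf_nonneg _ 0) hτ0.le hτF]
  refine IsGreatest.csSup_eq ⟨⟨_, quantile_mem_Icc hτF, ?_⟩, ?_⟩
  · exact (hobj _ (quantile_mem_Icc hτF)).trans <| congrArg _
      ((cdf (μ.map X)).integral_sub_to_quantile_eq_integral_max_sub hτF)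
  · rintro _ ⟨b, hb, rfl⟩
    refine (hobj b hb).trans_le ?_
    gcongr
    exact intervalIntegral_le_intervalIntegral_max_zero
      (intervalIntegrable_const.sub (monotone_cdf _).intervalIntegrable) hb.1 hb.2
end

section
/- Let N ≥ 1, τ ∈ (0,1], and x₁, …, x_N ∈ [0,1], and let x₍₁₎ ≤ x₍₂₎ ≤ … ≤ x₍N₎ be their nondecreasing rearrangement. Then the maximum over b ∈ [0,1] of the empirical CVaR objective b − (1/(Nτ)) Σ_{i=1}^N (b − x_i)⁺ is attained at b = x₍⌈Nτ⌉₎, and its value equals (1 − ⌈Nτ⌉/(Nτ))·x₍⌈Nτ⌉₎ + (1/(Nτ)) Σ_{i=1}^{⌈Nτ⌉} x₍ᵢ₎. -/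
open Finset

/-!
The objective `f b = b - c · ∑ᵢ (b - yᵢ)⁺` is concave and piecewise linear in `b`; at the
sorted point `q = y₍ₖ₎` its left slope is at least `1 - c (k - 1)` and its right slope at most
`1 - c k`. With `c = 1/(Nτ)` and `k = ⌈Nτ⌉` we have `c (k - 1) < 1 ≤ c k`, so `q` is a
maximiser. At `q` exactly the `k` smallest data points contribute to the sum, which gives the
closed form of the maximum.
-/

section PositivePart

variable {ι : Type*} [DecidableEq ι] {s A : Finset ι} {y : ι → ℝ} {b q : ℝ}

theorem sum_max_sub_eq_card_mul_sub_sum (hA : A ⊆ s) (hle : ∀ i ∈ A, y i ≤ q)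
    (hge : ∀ i ∈ s \ A, q ≤ y i) :
    ∑ i ∈ s, max (q - y i) 0 = #A * q - ∑ i ∈ A, y i := by
  rw [← sum_sdiff hA, sum_eq_zero fun i hi => max_eq_right (sub_nonpos.mpr (hge i hi)),
    zero_add, sum_congr rfl fun i hi => max_eq_left (sub_nonneg.mpr (hle i hi)),
    sum_sub_distrib, sum_const, nsmul_eq_mul]

theorem sum_max_sub_add_card_mul_le (hA : A ⊆ s) (hle : ∀ i ∈ A, y i ≤ q) (hqb : q ≤ b) :
    ∑ i ∈ s, max (q - y i) 0 + #A * (b - q) ≤ ∑ i ∈ s, max (b - y i) 0 := by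
  have hA_part : ∑ i ∈ A, max (q - y i) 0 + #A * (b - q) ≤ ∑ i ∈ A, max (b - y i) 0 := by
    rw [← nsmul_eq_mul, ← sum_const, ← sum_add_distrib]
    refine sum_le_sum fun i hi => ?_
    rw [max_eq_left (sub_nonneg.mpr (hle i hi)), max_eq_left (by linarith [hle i hi])]
    linarith
  have hrest : ∑ i ∈ s \ A, max (q - y i) 0 ≤ ∑ i ∈ s \ A, max (b - y i) 0 :=
    sum_le_sum fun i _ => max_le_max (by linarith) le_rfl
  rw [← sum_sdiff hA, ← sum_sdiff hA (f := fun i => max (b - y i) 0)]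
  linarith

theorem sum_max_sub_le_add_card_mul (hA : A ⊆ s) (hge : ∀ i ∈ s \ A, q ≤ y i) (hbq : b ≤ q) :
    ∑ i ∈ s, max (q - y i) 0 ≤ ∑ i ∈ s, max (b - y i) 0 + #A * (q - b) := by
  have hA_part : ∑ i ∈ A, max (q - y i) 0 ≤ ∑ i ∈ A, max (b - y i) 0 + #A * (q - b) := by
    rw [← nsmul_eq_mul, ← sum_const, ← sum_add_distrib]
    exact sum_le_sum fun i _ => by
      rw [max_le_iff]
      constructor <;> linarith [le_max_left (b - y i) 0, le_max_right (b - y i) 0]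
  have hrest : ∑ i ∈ s \ A, max (q - y i) 0 ≤ ∑ i ∈ s \ A, max (b - y i) 0 :=
    sum_le_sum fun i hi => by
      rw [max_eq_right (sub_nonpos.mpr (hge i hi))]
      exact le_max_right _ _
  rw [← sum_sdiff hA, ← sum_sdiff hA (f := fun i => max (b - y i) 0)]
  linarith

end PositivePart

section Sorted

variable {y : ℕ → ℝ} {N k : ℕ}

theorem MonotoneOn.le_apply_pred_of_mem_range (hy : MonotoneOn y (Set.Iio N)) (hkN : k ≤ N) :
    ∀ i ∈ range k, y i ≤ y (k - 1) := fun i hi => by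
  have hi := mem_range.mp hi
  exact hy (Set.mem_Iio.mpr (by omega)) (Set.mem_Iio.mpr (by omega)) (by omega)

theorem MonotoneOn.apply_pred_le_of_mem_sdiff_range (hy : MonotoneOn y (Set.Iio N)) {m : ℕ}
    (hm : k - 1 ≤ m) :
    ∀ i ∈ range N \ range m, y (k - 1) ≤ y i := fun i hi => by
  simp only [mem_sdiff, mem_range, not_lt] at hi
  exact hy (Set.mem_Iio.mpr (by omega)) (Set.mem_Iio.mpr hi.1) (by omega)

theorem sum_max_apply_pred_sub_eq (hy : MonotoneOn y (Set.Iio N)) (hkN : k ≤ N) :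
    ∑ i ∈ range N, max (y (k - 1) - y i) 0 = k * y (k - 1) - ∑ i ∈ range k, y i := by
  rw [sum_max_sub_eq_card_mul_sub_sum (range_subset_range.mpr hkN)
    (hy.le_apply_pred_of_mem_range hkN) (hy.apply_pred_le_of_mem_sdiff_range (Nat.sub_le k 1)),
    card_range]

theorem isMaxOn_sorted_quantile {c : ℝ} (hy : MonotoneOn y (Set.Iio N)) (hkN : k ≤ N)
    (hc_pred : c * (k - 1 : ℕ) ≤ 1) (hc : 1 ≤ c * k) :
    IsMaxOn (fun b => b - c * ∑ i ∈ range N, max (b - y i) 0) Set.univ (y (k - 1)) := by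
  have hc0 : 0 ≤ c := by
    by_contra! h
    nlinarith [Nat.cast_nonneg (α := ℝ) k]
  refine isMaxOn_univ_iff.mpr fun b => ?_
  rcases le_total (y (k - 1)) b with hqb | hbq
  · have hgrowth := sum_max_sub_add_card_mul_le (range_subset_range.mpr hkN)
      (hy.le_apply_pred_of_mem_range hkN) hqb
    rw [card_range] at hgrowth
    nlinarith [mul_le_mul_of_nonneg_left hgrowth hc0]
  · have hdecay := sum_max_sub_le_add_card_mul
      (range_subset_range.mpr ((Nat.sub_le k 1).trans hkN))
      (hy.apply_pred_le_of_mem_sdiff_range le_rfl) hbq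
    rw [card_range] at hdecay
    nlinarith [mul_le_mul_of_nonneg_left hdecay hc0]

end Sorted

theorem sum_fin_eq_sum_range_of_perm {α M : Type*} [AddCommMonoid M] {N : ℕ} {x : Fin N → α}
    {y : ℕ → α} (σ : Equiv.Perm (Fin N)) (hσ : ∀ i : Fin N, y i = x (σ i)) (f : α → M) :
    ∑ i : Fin N, f (x i) = ∑ i ∈ range N, f (y i) := by
  rw [← Equiv.sum_comp σ, ← Fin.sum_univ_eq_sum_range]
  simp only [hσ]

theorem empirical_cvar_characterization_general (N : ℕ) (hN : 1 ≤ N)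
    (τ : ℝ) (hτ : τ ∈ Set.Ioc (0:ℝ) 1)
    (x : Fin N → ℝ)
    (y : ℕ → ℝ) (hperm : ∃ σ : Equiv.Perm (Fin N), ∀ i : Fin N, y i = x (σ i))
    (hsorted : ∀ i j : ℕ, i ≤ j → j < N → y i ≤ y j) :
    IsMaxOn (fun b => b - (1/(N*τ)) * ∑ i : Fin N, max (b - x i) 0) (Set.Icc (0:ℝ) 1)
      (y (⌈(N:ℝ)*τ⌉₊ - 1)) ∧
    y (⌈(N:ℝ)*τ⌉₊ - 1) - (1/(N*τ)) * ∑ i : Fin N, max (y (⌈(N:ℝ)*τ⌉₊ - 1) - x i) 0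
      = (1 - (⌈(N:ℝ)*τ⌉₊ : ℝ)/(N*τ)) * y (⌈(N:ℝ)*τ⌉₊ - 1)
        + (1/(N*τ)) * ∑ i ∈ Finset.range ⌈(N:ℝ)*τ⌉₊, y i := by
  obtain ⟨σ, hσ⟩ := hperm
  have hy : MonotoneOn y (Set.Iio N) := fun i _ j hj hij => hsorted i j hij hj
  have hNτ : 0 < (N:ℝ) * τ := mul_pos (by exact_mod_cast hN) hτ.1
  set k := ⌈(N:ℝ)*τ⌉₊
  have hk : 0 < k := Nat.one_le_ceil_iff.mpr hNτ
  have hkN : k ≤ N := Nat.ceil_le.mpr (mul_le_of_le_one_right (Nat.cast_nonneg N) hτ.2)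
  have hk_pred : ((k - 1 : ℕ) : ℝ) ≤ N * τ := by
    rw [Nat.cast_pred hk]
    linarith [Nat.ceil_lt_add_one hNτ.le]
  have hsum (b : ℝ) : ∑ i : Fin N, max (b - x i) 0 = ∑ i ∈ range N, max (b - y i) 0 :=
    sum_fin_eq_sum_range_of_perm σ hσ fun a => max (b - a) 0
  simp only [hsum]
  refine ⟨(isMaxOn_sorted_quantile hy hkN ?_ ?_).on_subset (Set.subset_univ _), ?_⟩
  · rwa [one_div_mul_eq_div, div_le_one₀ hNτ]
  · rw [one_div_mul_eq_div, one_le_div₀ hNτ]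
    exact Nat.le_ceil _
  · rw [sum_max_apply_pred_sub_eq hy hkN, div_eq_mul_one_div (k : ℝ)]
    ring

/-- The empirical CVaR objective `b ↦ b − (1/(Nτ)) Σᵢ (b − xᵢ)⁺` over `b ∈ [0,1]` attains its
maximum at the empirical quantile `x₍⌈Nτ⌉₎` (the `⌈Nτ⌉`-th smallest data point, here
`y (⌈Nτ⌉ - 1)` for the 0-indexed nondecreasing rearrangement `y`), and the maximal value is
`(1 − ⌈Nτ⌉/(Nτ))·x₍⌈Nτ⌉₎ + (1/(Nτ)) Σ_{i=1}^{⌈Nτ⌉} x₍ᵢ₎`. -/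
theorem empirical_cvar_characterization (N : ℕ) (hN : 1 ≤ N)
    (τ : ℝ) (hτ : τ ∈ Set.Ioc (0:ℝ) 1)
    (x : Fin N → ℝ) (hx : ∀ i, x i ∈ Set.Icc (0:ℝ) 1)
    (y : ℕ → ℝ) (hperm : ∃ σ : Equiv.Perm (Fin N), ∀ i : Fin N, y i = x (σ i))
    (hsorted : ∀ i j : ℕ, i ≤ j → j < N → y i ≤ y j) :
    IsMaxOn (fun b => b - (1/(N*τ)) * ∑ i : Fin N, max (b - x i) 0) (Set.Icc (0:ℝ) 1)
      (y (⌈(N:ℝ)*τ⌉₊ - 1)) ∧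
    y (⌈(N:ℝ)*τ⌉₊ - 1) - (1/(N*τ)) * ∑ i : Fin N, max (y (⌈(N:ℝ)*τ⌉₊ - 1) - x i) 0
      = (1 - (⌈(N:ℝ)*τ⌉₊ : ℝ)/(N*τ)) * y (⌈(N:ℝ)*τ⌉₊ - 1)
        + (1/(N*τ)) * ∑ i ∈ Finset.range ⌈(N:ℝ)*τ⌉₊, y i :=
  empirical_cvar_characterization_general N hN τ hτ x y hperm hsorted
end

section
/- Let U₁, …, U_N be i.i.d. random variables uniformly distributed on [0,1], let p ∈ (0,1), δ ∈ (0,1), and suppose N ≥ 25 log(2/δ). Then with probability at least 1 − δ, |U₍⌈Np⌉₎ − p| ≤ √(3p(1−p) log(2/δ)/N) + 5 log(2/δ)/N, where U₍⌈Np⌉₎ is the ⌈Np⌉-th smallest among U₁, …, U_N. -/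
/-!
Let `k = ⌈Np⌉`. Comparing the `k`-th order statistic with a level `t` amounts to comparing `k`
with the number of `U i` that are `≤ t`. Hence `U₍k₎ < p - ε` forces the count of the `U i` in
`(-∞, p - ε]`, a binomial variable, to exceed its mean by at least `Nε`, and `U₍k₎ > p + ε` forces
the same for the count in `(p + ε, ∞)`. Bernstein's inequality, obtained by the Chernoff method
from `eˣ ≤ 1 + x + x² / (2 (1 - c/3))` for `|x| ≤ c < 3`, bounds each of these events by
`exp (-log (2/δ)) = δ/2`: `ε` is chosen so that the Bernstein exponent
`(Nε)² / (2 (N q (1 - q) + Nε/3))` is at least `log (2/δ)`.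
-/

open Real MeasureTheory ProbabilityTheory Set
open scoped Finset Nat

theorem Real.exp_le_one_add_add_sq_div {x c : ℝ} (hx : |x| ≤ c) (hc : c < 3) :
    exp x ≤ 1 + x + x ^ 2 / (2 * (1 - c / 3)) := by
  have hc0 : 0 ≤ c := (abs_nonneg x).trans hx
  have hseries : HasSum (fun n ↦ x ^ (n + 2) / (n + 2)!) (exp x - (1 + x)) := by
    have := NormedSpace.expSeries_div_hasSum_exp x
    rw [← Real.exp_eq_exp_ℝ, ← hasSum_nat_add_iff' 2] at this
    simpa [Finset.sum_range_succ] using this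
  have hgeom : HasSum (fun n : ℕ ↦ x ^ 2 / 2 * (c / 3) ^ n) (x ^ 2 / 2 * (1 - c / 3)⁻¹) :=
    (hasSum_geometric_of_lt_one (by positivity) (by linarith)).mul_left _
  have hterm (n : ℕ) : x ^ (n + 2) / (n + 2)! ≤ x ^ 2 / 2 * (c / 3) ^ n := by
    have hfact : (2 * 3 ^ n : ℝ) ≤ (n + 2)! := by
      have := @Nat.factorial_mul_pow_le_factorial 2 n
      rw [add_comm n 2]; exact_mod_cast this
    calc x ^ (n + 2) / (n + 2)! ≤ x ^ 2 * c ^ n / (2 * 3 ^ n) := by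
          gcongr
          calc x ^ (n + 2) ≤ |x| ^ (n + 2) := by rw [← abs_pow]; exact le_abs_self _
            _ = x ^ 2 * |x| ^ n := by rw [pow_add, sq_abs, mul_comm]
            _ ≤ x ^ 2 * c ^ n := by gcongr
      _ = x ^ 2 / 2 * (c / 3) ^ n := by rw [div_pow]; field_simp
  have := hasSum_le hterm hseries hgeom
  rw [← div_eq_mul_inv, div_div] at this
  linarith

theorem Real.one_sub_add_mul_exp_le_exp {q s : ℝ} (hq0 : 0 ≤ q) (hq1 : q ≤ 1) (hs0 : 0 ≤ s)
    (hs3 : s < 3) :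
    1 - q + q * exp s ≤ exp (q * s + q * (1 - q) * (s ^ 2 / (2 * (1 - s / 3)))) := by
  set G := s ^ 2 / (2 * (1 - s / 3))
  have hlow : exp (-(q * s)) ≤ 1 - q * s + (q * s) ^ 2 / (2 * (1 - s / 3)) := by
    simpa [sub_eq_add_neg] using
      Real.exp_le_one_add_add_sq_div (x := -(q * s)) (c := s)
        (by rw [abs_neg, abs_of_nonneg (by positivity)]; nlinarith) hs3
  have hhigh : exp ((1 - q) * s) ≤ 1 + (1 - q) * s + ((1 - q) * s) ^ 2 / (2 * (1 - s / 3)) :=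
    Real.exp_le_one_add_add_sq_div
      (by rw [abs_of_nonneg (by nlinarith)]; nlinarith) hs3
  have hG : (1 - q) * ((q * s) ^ 2 / (2 * (1 - s / 3)))
      + q * (((1 - q) * s) ^ 2 / (2 * (1 - s / 3))) = q * (1 - q) * G := by
    simp only [G]; ring
  have h1 : exp (q * s) * exp (-(q * s)) = 1 := by rw [← exp_add, add_neg_cancel, exp_zero]
  have h2 : exp (q * s) * exp ((1 - q) * s) = exp s := by rw [← exp_add]; ring_nf
  calc 1 - q + q * exp s = exp (q * s) * ((1 - q) * exp (-(q * s)) + q * exp ((1 - q) * s)) := by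
        linear_combination (-(1 - q)) * h1 - q * h2
    _ ≤ exp (q * s) * (1 + q * (1 - q) * G) := by
        refine mul_le_mul_of_nonneg_left ?_ (exp_pos _).le
        nlinarith [mul_le_mul_of_nonneg_left hlow (by linarith : 0 ≤ 1 - q),
          mul_le_mul_of_nonneg_left hhigh hq0]
    _ ≤ exp (q * s) * exp (q * (1 - q) * G) := by
        gcongr; linarith [add_one_le_exp (q * (1 - q) * G)]
    _ = _ := (exp_add _ _).symm

theorem two_mul_mul_add_div_three_le_sq {v w L a : ℝ} (hv : 0 ≤ v) (hL : 0 ≤ L)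
    (ha : √(3 * v * L) + 5 * L ≤ a) (hw : w ≤ v + a) : 2 * L * (w + a / 3) ≤ a ^ 2 := by
  set x := √(3 * v * L)
  have hx : 0 ≤ x := sqrt_nonneg _
  have hx2 : x ^ 2 = 3 * v * L := sq_sqrt (by positivity)
  have hmono : (x + 5 * L) * (x + 5 * L - 8 / 3 * L) ≤ a * (a - 8 / 3 * L) :=
    mul_le_mul ha (by linarith) (by linarith) (by linarith)
  nlinarith [mul_le_mul_of_nonneg_left hw (by linarith : 0 ≤ 2 * L)]

theorem natCast_card_filter_mem_eq_sum_indicator {Ω ι β : Type*} [Fintype ι] (x : ι → Ω → β)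
    (S : Set β) [DecidablePred (· ∈ S)] (ω : Ω) :
    ((#{i | x i ω ∈ S} : ℕ) : ℝ) = (∑ i, (x i ⁻¹' S).indicator 1) ω := by
  rw [Finset.natCast_card_filter, Finset.sum_apply]
  refine Finset.sum_congr rfl fun i _ ↦ ?_
  by_cases h : x i ω ∈ S <;> simp [h]

section

variable {Ω : Type*} [MeasurableSpace Ω] {μ : Measure Ω} [IsProbabilityMeasure μ]

theorem mgf_indicator_one {E : Set Ω} (hE : MeasurableSet E) (t : ℝ) :
    mgf (E.indicator 1) μ t = 1 - μ.real E + μ.real E * exp t := by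
  have h : (fun ω ↦ exp (t * E.indicator 1 ω))
      = fun ω ↦ E.indicator (fun _ ↦ exp t - 1) ω + 1 := by
    ext ω
    by_cases hω : ω ∈ E <;> simp [hω]
  rw [mgf, h, integral_add ((integrable_const _).indicator hE) (integrable_const 1),
    integral_indicator_const _ hE, integral_const]
  simp only [probReal_univ, smul_eq_mul]
  ring

theorem bernstein_card_filter_mem {ι β : Type*} [Fintype ι] [Nonempty ι] [MeasurableSpace β]
    {U : ι → Ω → β} (hU : ∀ i, Measurable (U i)) (hindep : iIndepFun U μ)
    {S : Set β} [DecidablePred (· ∈ S)] (hS : MeasurableSet S) {q a : ℝ} (hq : q ∈ Ioo 0 1)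
    (hqS : ∀ i, μ.real (U i ⁻¹' S) = q) (ha : 0 < a) :
    μ.real {ω | Fintype.card ι * q + a ≤ #{i | U i ω ∈ S}}
      ≤ exp (-(a ^ 2 / (2 * (Fintype.card ι * q * (1 - q) + a / 3)))) := by
  obtain ⟨hq0, hq1⟩ := hq
  set n := Fintype.card ι
  set v := n * q * (1 - q)
  have hv : 0 < v := by
    have : (0 : ℝ) < n := by simp [n, Fintype.card_pos]
    have : 0 < 1 - q := by linarith
    positivity
  -- the Chernoff parameter that optimises the resulting Bernstein exponent
  set s := a / (v + a / 3)
  have hs0 : 0 ≤ s := by positivity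
  have hs3 : s < 3 := by rw [div_lt_iff₀ (by positivity)]; linarith
  set X : ι → Ω → ℝ := fun i ↦ (U i ⁻¹' S).indicator 1
  have hX (i : ι) : Measurable (X i) := measurable_one.indicator (hU i hS)
  have hXindep : iIndepFun X μ :=
    hindep.comp (fun _ ↦ S.indicator 1) fun _ ↦ measurable_one.indicator hS
  have hcount (ω : Ω) : ((#{i | U i ω ∈ S} : ℕ) : ℝ) = (∑ i, X i) ω :=
    natCast_card_filter_mem_eq_sum_indicator U S ω
  have hint : Integrable (fun ω ↦ exp (s * (∑ i, X i) ω)) μ := by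
    refine .of_bound (by fun_prop) (exp (s * n)) (ae_of_all _ fun ω ↦ ?_)
    rw [Real.norm_eq_abs, abs_of_pos (exp_pos _), ← hcount]
    gcongr
    exact_mod_cast Finset.card_le_univ _
  have hmgf : mgf (∑ i, X i) μ s = (1 - q + q * exp s) ^ n := by
    rw [hXindep.mgf_sum hX,
      Finset.prod_congr rfl fun i _ ↦ by rw [mgf_indicator_one (hU i hS), hqS],
      Finset.prod_const, Finset.card_univ]
  have hexponent : -s * (n * q + a) + n * (q * s + q * (1 - q) * (s ^ 2 / (2 * (1 - s / 3))))
      = -(a ^ 2 / (2 * (v + a / 3))) := by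
    have hn : (n : ℝ) ≠ 0 := by simp [n, Fintype.card_ne_zero]
    have : 1 - s / 3 = v / (v + a / 3) := by simp only [s]; field_simp; ring
    rw [this]; simp only [s, v]; field_simp; ring
  calc μ.real {ω | n * q + a ≤ #{i | U i ω ∈ S}}
      = μ.real {ω | n * q + a ≤ (∑ i, X i) ω} := by simp_rw [hcount]
    _ ≤ exp (-s * (n * q + a)) * mgf (∑ i, X i) μ s := measure_ge_le_exp_mul_mgf _ hs0 hint
    _ ≤ exp (-s * (n * q + a)) * exp (q * s + q * (1 - q) * (s ^ 2 / (2 * (1 - s / 3)))) ^ n := by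
        rw [hmgf]
        gcongr
        exact Real.one_sub_add_mul_exp_le_exp hq0.le hq1.le hs0 hs3
    _ = exp (-(a ^ 2 / (2 * (v + a / 3)))) := by rw [← exp_nat_mul, ← exp_add, hexponent]

theorem measureReal_le_card_filter_mem_le_exp_neg {ι β : Type*} [Fintype ι] [Nonempty ι]
    [MeasurableSpace β] {U : ι → Ω → β} (hU : ∀ i, Measurable (U i)) (hindep : iIndepFun U μ)
    {S : Set β} [DecidablePred (· ∈ S)] (hS : MeasurableSet S) {p q ε L m : ℝ}
    (hq : q ∈ Ioo 0 1) (hqS : ∀ i, μ.real (U i ⁻¹' S) = q) (hp : p ∈ Icc 0 1) (hL : 0 < L)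
    (hε : Fintype.card ι * ε = √(3 * (Fintype.card ι * p * (1 - p)) * L) + 5 * L)
    (hqp : q * (1 - q) ≤ p * (1 - p) + ε) (hm : Fintype.card ι * q + Fintype.card ι * ε ≤ m) :
    μ.real {ω | m ≤ #{i | U i ω ∈ S}} ≤ exp (-L) := by
  set n : ℝ := (Fintype.card ι : ℝ)
  have hn : 0 < n := by simp [n, Fintype.card_pos]
  have hεn : 5 * L ≤ n * ε := by rw [hε]; linarith [sqrt_nonneg (3 * (n * p * (1 - p)) * L)]
  have ha : 0 < m - n * q := by linarith
  have hw : 0 ≤ n * q * (1 - q) := mul_nonneg (by nlinarith [hq.1]) (by linarith [hq.2])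
  have hB := bernstein_card_filter_mem hU hindep hS hq hqS ha
  rw [add_sub_cancel] at hB
  refine hB.trans (exp_le_exp.mpr (neg_le_neg ?_))
  rw [le_div_iff₀ (by positivity)]
  have := two_mul_mul_add_div_three_le_sq (v := n * p * (1 - p)) (w := n * q * (1 - q))
    (mul_nonneg (mul_nonneg hn.le hp.1) (by linarith [hp.2])) hL.le (a := m - n * q)
    (by rw [← hε]; linarith) (by nlinarith [mul_le_mul_of_nonneg_left hqp hn.le])
  linarith

end

/-- For `1 ≤ k ≤ card ι` this is the `k`-th smallest of the values `x i`, counted with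
multiplicity; otherwise the set is empty or unbounded below and `sInf` returns its junk
value `0`. -/
noncomputable def orderStatistic {ι : Type*} [Fintype ι] (x : ι → ℝ) (k : ℕ) : ℝ :=
  sInf {t | k ≤ #{i | x i ≤ t}}

section

variable {ι : Type*} [Fintype ι] {x : ι → ℝ} {k : ℕ} {t : ℝ}

theorem orderStatistic_le_of_le_card_filter (hk : k ≠ 0) (ht : k ≤ #{i | x i ≤ t}) :
    orderStatistic x k ≤ t := by
  refine csInf_le ⟨⨅ i, x i, fun t' ht' ↦ ?_⟩ ht
  obtain ⟨i, hi⟩ := Finset.card_pos.mp (lt_of_lt_of_le (Nat.pos_of_ne_zero hk) ht')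
  exact (ciInf_le (Finite.bddBelow_range x) i).trans (Finset.mem_filter.mp hi).2

theorem le_card_filter_of_orderStatistic_lt (hk : k ≤ Fintype.card ι)
    (ht : orderStatistic x k < t) : k ≤ #{i | x i ≤ t} := by
  have hne : {t | k ≤ #{i | x i ≤ t}}.Nonempty := by
    refine ⟨⨆ i, x i, ?_⟩
    rw [mem_ofPred_eq, Finset.filter_true_of_mem fun i _ ↦ le_ciSup (Finite.bddAbove_range x) i]
    exact hk
  obtain ⟨t', ht', ht't⟩ := exists_lt_of_csInf_lt hne ht
  exact ht'.trans (Finset.card_le_card fun i hi ↦ by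
    simp only [Finset.mem_filter] at hi ⊢; exact ⟨hi.1, hi.2.trans ht't.le⟩)

theorem card_add_one_le_add_card_filter_lt (hk : k ≠ 0) (ht : t < orderStatistic x k) :
    Fintype.card ι + 1 ≤ k + #{i | t < x i} := by
  have hlt : #{i | x i ≤ t} < k := by
    by_contra! h
    exact (orderStatistic_le_of_le_card_filter hk h).not_gt ht
  have := Finset.card_filter_add_card_filter_not (s := .univ) (x · ≤ t)
  simp only [not_le, Finset.card_univ] at this
  omega

end

section

variable {Ω : Type*} [MeasurableSpace Ω] {μ : Measure Ω}

theorem measure_le_card_filter_mem_eq_zero {ι β : Type*} [Fintype ι] {U : ι → Ω → β}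
    {S : Set β} [DecidablePred (· ∈ S)] (hS : ∀ i, μ (U i ⁻¹' S) = 0) {m : ℝ} (hm : 0 < m) :
    μ {ω | m ≤ #{i | U i ω ∈ S}} = 0 := by
  refine measure_mono_null (fun ω hω ↦ ?_) (measure_iUnion_null hS)
  have : 0 < #{i | U i ω ∈ S} := by exact_mod_cast hm.trans_le hω
  obtain ⟨i, hi⟩ := Finset.card_pos.mp this
  exact mem_iUnion.mpr ⟨i, (Finset.mem_filter.mp hi).2⟩

theorem measure_preimage_Iic_of_map_eq {X : Ω → ℝ} (hX : Measurable X)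
    (hunif : μ.map X = volume.restrict (Icc 0 1)) {t : ℝ} (ht : t ≤ 1) :
    μ (X ⁻¹' Iic t) = ENNReal.ofReal t := by
  rw [← Measure.map_apply hX measurableSet_Iic, hunif, Measure.restrict_apply measurableSet_Iic,
    show Iic t ∩ Icc 0 1 = Icc 0 t by ext; simp only [mem_inter_iff, mem_Iic, mem_Icc]; grind,
    Real.volume_Icc, sub_zero]

theorem measure_preimage_Ioi_of_map_eq {X : Ω → ℝ} (hX : Measurable X)
    (hunif : μ.map X = volume.restrict (Icc 0 1)) {t : ℝ} (ht : 0 ≤ t) :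
    μ (X ⁻¹' Ioi t) = ENNReal.ofReal (1 - t) := by
  rw [← Measure.map_apply hX measurableSet_Ioi, hunif, Measure.restrict_apply measurableSet_Ioi,
    show Ioi t ∩ Icc 0 1 = Ioc t 1 by
      ext; simp only [mem_inter_iff, mem_Ioi, mem_Icc, mem_Ioc]; grind,
    Real.volume_Ioc]

end

section

variable {Ω : Type*} [MeasurableSpace Ω] {μ : Measure Ω} [IsProbabilityMeasure μ]
  {N : ℕ} [NeZero N] {U : Fin N → Ω → ℝ} {p ε L : ℝ}

theorem measureReal_orderStatistic_lt_sub_le (hU : ∀ i, Measurable (U i))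
    (hindep : iIndepFun U μ) (hunif : ∀ i, μ.map (U i) = volume.restrict (Icc 0 1))
    (hp : p ∈ Ioo 0 1) (hL : 0 < L) (hε : N * ε = √(3 * (N * p * (1 - p)) * L) + 5 * L) :
    μ.real {ω | orderStatistic (U · ω) ⌈N * p⌉₊ < p - ε} ≤ exp (-L) := by
  obtain ⟨hp0, hp1⟩ := hp
  set k := ⌈N * p⌉₊
  have hN : (0 : ℝ) < N := Nat.cast_pos.mpr (NeZero.pos N)
  have hkp : N * p ≤ k := Nat.le_ceil _
  have hkN : k ≤ N := Nat.ceil_le.mpr (by nlinarith)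
  have hε0 : 0 < ε := pos_of_mul_pos_right (hε ▸ by positivity) hN.le
  refine (measureReal_mono (s₂ := {ω | (k : ℝ) ≤ #{i | U i ω ∈ Iic (p - ε)}})
    fun ω hω ↦ ?_).trans ?_
  · exact_mod_cast le_card_filter_of_orderStatistic_lt (by simpa using hkN) hω
  have hmeas (hq : p - ε ≤ 1) (i : Fin N) : μ (U i ⁻¹' Iic (p - ε)) = .ofReal (p - ε) :=
    measure_preimage_Iic_of_map_eq (hU i) (hunif i) hq
  rcases le_or_gt (p - ε) 0 with hq0 | hq0
  · have hnull := measure_le_card_filter_mem_eq_zero (μ := μ) (U := U) (S := Iic (p - ε))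
      (m := k) (fun i ↦ by rw [hmeas (by linarith), ENNReal.ofReal_eq_zero.mpr hq0]) (by nlinarith)
    rw [measureReal_def, hnull, ENNReal.toReal_zero]
    positivity
  refine measureReal_le_card_filter_mem_le_exp_neg hU hindep measurableSet_Iic (q := p - ε)
    ⟨hq0, by linarith⟩
    (fun i ↦ by rw [measureReal_def, hmeas (by linarith), ENNReal.toReal_ofReal hq0.le])
    ⟨hp0.le, hp1.le⟩ hL (by simpa using hε) (by nlinarith) (by simp; linarith)

theorem measureReal_add_lt_orderStatistic_le (hU : ∀ i, Measurable (U i))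
    (hindep : iIndepFun U μ) (hunif : ∀ i, μ.map (U i) = volume.restrict (Icc 0 1))
    (hp : p ∈ Ioo 0 1) (hL : 0 < L) (hε : N * ε = √(3 * (N * p * (1 - p)) * L) + 5 * L) :
    μ.real {ω | p + ε < orderStatistic (U · ω) ⌈N * p⌉₊} ≤ exp (-L) := by
  obtain ⟨hp0, hp1⟩ := hp
  set k := ⌈N * p⌉₊
  have hN : (0 : ℝ) < N := Nat.cast_pos.mpr (NeZero.pos N)
  have hk0 : k ≠ 0 := (Nat.ceil_pos.mpr (by positivity)).ne'
  have hkp : k < N * p + 1 := Nat.ceil_lt_add_one (by positivity)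
  have hkN : k ≤ N := Nat.ceil_le.mpr (by nlinarith)
  have hε0 : 0 < ε := pos_of_mul_pos_right (hε ▸ by positivity) hN.le
  refine (measureReal_mono (s₂ := {ω | (N : ℝ) - k + 1 ≤ #{i | U i ω ∈ Ioi (p + ε)}})
    fun ω hω ↦ ?_).trans ?_
  · have := card_add_one_le_add_card_filter_lt hk0 hω
    rw [Fintype.card_fin] at this
    simp only [mem_ofPred_eq, mem_Ioi]
    rw [sub_add_eq_add_sub, sub_le_iff_le_add']
    exact_mod_cast this
  have hmeas (hq : 0 ≤ p + ε) (i : Fin N) : μ (U i ⁻¹' Ioi (p + ε)) = .ofReal (1 - (p + ε)) :=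
    measure_preimage_Ioi_of_map_eq (hU i) (hunif i) hq
  rcases le_or_gt 1 (p + ε) with hq1 | hq1
  · have hnull := measure_le_card_filter_mem_eq_zero (μ := μ) (U := U) (S := Ioi (p + ε))
      (m := N - k + 1)
      (fun i ↦ by rw [hmeas (by linarith), ENNReal.ofReal_eq_zero.mpr (by linarith)])
      (by have : (k : ℝ) ≤ N := by exact_mod_cast hkN
          linarith)
    rw [measureReal_def, hnull, ENNReal.toReal_zero]
    positivity
  refine measureReal_le_card_filter_mem_le_exp_neg hU hindep measurableSet_Ioi (q := 1 - (p + ε))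
    ⟨by linarith, by linarith⟩
    (fun i ↦ by rw [measureReal_def, hmeas (by linarith), ENNReal.toReal_ofReal (by linarith)])
    ⟨hp0.le, hp1.le⟩ hL (by simpa using hε) (by nlinarith) (by simp; linarith)

end

/-- Concentration of the `⌈Np⌉`-th order statistic of `N` i.i.d. uniform random variables on
`[0,1]` around `p`: with probability at least `1 − δ`,
`|U₍⌈Np⌉₎ − p| ≤ √(3p(1−p)log(2/δ)/N) + 5 log(2/δ)/N`, provided `N ≥ 25 log(2/δ)`. -/
theorem uniform_order_statistic_concentration {Ω : Type*} [MeasurableSpace Ω]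
    (μ : Measure Ω) [IsProbabilityMeasure μ]
    (N : ℕ) (p δ : ℝ) (hp : p ∈ Set.Ioo (0:ℝ) 1) (hδ : δ ∈ Set.Ioo (0:ℝ) 1)
    (hN : 25 * Real.log (2/δ) ≤ (N : ℝ))
    (U : Fin N → Ω → ℝ) (hUmeas : ∀ i, Measurable (U i))
    (hindep : ProbabilityTheory.iIndepFun U μ)
    (hunif : ∀ i, Measure.map (U i) μ = volume.restrict (Set.Icc (0:ℝ) 1))
    (V : Ω → ℝ)
    (hV : ∀ ω, V ω
      = sInf {t : ℝ | ⌈(N:ℝ)*p⌉₊ ≤ (Finset.univ.filter (fun i : Fin N => U i ω ≤ t)).card}) :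
    (1 - δ : ℝ) ≤ (μ {ω | |V ω - p|
        ≤ Real.sqrt (3*p*(1-p)*Real.log (2/δ)/N) + 5*Real.log (2/δ)/N}).toReal := by
  obtain ⟨hδ0, hδ1⟩ := hδ
  set L := Real.log (2 / δ)
  have hL : 0 < L := Real.log_pos (by rw [lt_div_iff₀ hδ0]; linarith)
  have hN0 : (0 : ℝ) < N := by linarith
  have : NeZero N := ⟨by exact_mod_cast hN0.ne'⟩
  set ε := √(3 * p * (1 - p) * L / N) + 5 * L / N
  have hε : N * ε = √(3 * (N * p * (1 - p)) * L) + 5 * L := by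
    rw [show 3 * (N * p * (1 - p)) * L = N ^ 2 * (3 * p * (1 - p) * L / N) by field_simp,
      sqrt_mul (sq_nonneg _), sqrt_sq hN0.le]
    simp only [ε]
    field_simp
  have hexpL : exp (-L) = δ / 2 := by rw [exp_neg, exp_log (by positivity), inv_div]
  have hV' (ω : Ω) : V ω = orderStatistic (U · ω) ⌈N * p⌉₊ := hV ω
  have hlow := measureReal_orderStatistic_lt_sub_le hUmeas hindep hunif hp hL hε
  have hhigh := measureReal_add_lt_orderStatistic_le hUmeas hindep hunif hp hL hε
  simp only [← hV', hexpL] at hlow hhigh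
  have hcover : univ ⊆ {ω | |V ω - p| ≤ ε} ∪ ({ω | V ω < p - ε} ∪ {ω | p + ε < V ω}) :=
    fun ω _ ↦ by simp only [mem_union, mem_ofPred_eq, abs_le]; grind
  have hgood := (measureReal_mono (μ := μ) hcover).trans (measureReal_union_le _ _)
  have hbad := measureReal_union_le (μ := μ) {ω | V ω < p - ε} {ω | p + ε < V ω}
  rw [probReal_univ] at hgood
  rw [← measureReal_def]
  linarith
end

section
/- Let τ ∈ (0,1], p_min > 0, and let X be a random variable with values in [0,1] whose law has a density p with respect to Lebesgue measure satisfying p(x) ≥ p_min for all x ∈ [0,1]. Then the function f(b) = τ⁻¹ E[(b − X)⁺] − b is (p_min/τ)-strongly convex on [0,1]: for all b₁, b₂ ∈ [0,1] and λ ∈ [0,1], f(λb₁ + (1−λ)b₂) ≤ λ f(b₁) + (1−λ) f(b₂) − (p_min/(2τ)) λ(1−λ)(b₁ − b₂)². -/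
/-!
The hinge `x ↦ (b - x)⁺` is convex in `b`, so the convexity gap
`l (b₁ - x)⁺ + (1 - l) (b₂ - x)⁺ - (l b₁ + (1 - l) b₂ - x)⁺` is nonnegative, and since
`∫₀¹ (b - x)⁺ dx = b² / 2` its Lebesgue integral over `[0,1]` is `l (1 - l) (b₁ - b₂)² / 2`.
Integrating the gap against the law of `X`, whose density is at least `p_min` on `[0,1]`,
gives the quadratic gain `p_min l (1 - l) (b₁ - b₂)² / 2`; the term `-b` is affine.
-/

open MeasureTheory Set

lemma integral_hinge {a b c : ℝ} (hab : a ≤ b) (hbc : b ≤ c) :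
    ∫ x in a..c, max (b - x) 0 = (b - a) ^ 2 / 2 := by
  have hcont : Continuous fun x : ℝ => max (b - x) 0 := by fun_prop
  rw [← intervalIntegral.integral_add_adjacent_intervals (hcont.intervalIntegrable a b)
    (hcont.intervalIntegrable b c)]
  have h_left : ∫ x in a..b, max (b - x) 0 = ∫ x in a..b, (b - x) :=
    intervalIntegral.integral_congr fun x hx => by
      rw [uIcc_of_le hab] at hx
      exact max_eq_left (by linarith [hx.2])
  have h_right : ∫ x in b..c, max (b - x) 0 = ∫ _ in b..c, (0 : ℝ) :=
    intervalIntegral.integral_congr fun x hx => by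
      rw [uIcc_of_le hbc] at hx
      exact max_eq_right (by linarith [hx.1])
  rw [h_left, h_right, intervalIntegral.integral_sub intervalIntegrable_const
    intervalIntegral.intervalIntegrable_id]
  simp only [intervalIntegral.integral_const, integral_id, smul_eq_mul, mul_zero, add_zero]
  ring

lemma integrable_hinge_comp {Ω : Type*} [MeasurableSpace Ω] {μ : Measure Ω} [IsFiniteMeasure μ]
    {X : Ω → ℝ} (hX : AEMeasurable X μ) {a : ℝ} (ha : ∀ ω, a ≤ X ω) (b : ℝ) :
    Integrable (fun ω => max (b - X ω) 0) μ := by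
  refine Integrable.mono' (integrable_const (max (b - a) 0))
    ((hX.const_sub b).max aemeasurable_const).aestronglyMeasurable (ae_of_all _ fun ω => ?_)
  rw [Real.norm_eq_abs, abs_of_nonneg (le_max_right _ _)]
  exact max_le_max_right 0 (by linarith [ha ω])

noncomputable def hingeGap (l b₁ b₂ x : ℝ) : ℝ :=
  l * max (b₁ - x) 0 + (1 - l) * max (b₂ - x) 0 - max (l * b₁ + (1 - l) * b₂ - x) 0

lemma continuous_hingeGap (l b₁ b₂ : ℝ) : Continuous (hingeGap l b₁ b₂) := by
  unfold hingeGap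
  fun_prop

lemma hingeGap_nonneg {l : ℝ} (hl : l ∈ Icc (0 : ℝ) 1) (b₁ b₂ x : ℝ) :
    0 ≤ hingeGap l b₁ b₂ x := by
  have h₁ := mul_le_mul_of_nonneg_left (le_max_left (b₁ - x) 0) hl.1
  have h₂ := mul_le_mul_of_nonneg_left (le_max_left (b₂ - x) 0) (sub_nonneg.2 hl.2)
  have h₃ := mul_nonneg hl.1 (le_max_right (b₁ - x) 0)
  have h₄ := mul_nonneg (sub_nonneg.2 hl.2) (le_max_right (b₂ - x) 0)
  rw [hingeGap, sub_nonneg]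
  exact max_le (by linarith) (by linarith)

lemma integral_hingeGap {l b₁ b₂ : ℝ} (hl : l ∈ Icc (0 : ℝ) 1)
    (hb₁ : b₁ ∈ Icc (0 : ℝ) 1) (hb₂ : b₂ ∈ Icc (0 : ℝ) 1) :
    ∫ x in (0 : ℝ)..1, hingeGap l b₁ b₂ x = l * (1 - l) * (b₁ - b₂) ^ 2 / 2 := by
  have hb : l * b₁ + (1 - l) * b₂ ∈ Icc (0 : ℝ) 1 := by
    constructor <;> nlinarith [hb₁.1, hb₁.2, hb₂.1, hb₂.2, hl.1, hl.2]
  have hi : ∀ b : ℝ, IntervalIntegrable (fun x => max (b - x) 0) volume 0 1 :=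
    fun b => (by fun_prop : Continuous fun x : ℝ => max (b - x) 0).intervalIntegrable 0 1
  unfold hingeGap
  rw [intervalIntegral.integral_sub (((hi b₁).const_mul l).add ((hi b₂).const_mul (1 - l)))
      (hi _), intervalIntegral.integral_add ((hi b₁).const_mul l) ((hi b₂).const_mul (1 - l)),
    intervalIntegral.integral_const_mul, intervalIntegral.integral_const_mul,
    integral_hinge hb₁.1 hb₁.2, integral_hinge hb₂.1 hb₂.2, integral_hinge hb.1 hb.2]
  ring

lemma mul_setIntegral_le_integral_of_density {Ω : Type*} [MeasurableSpace Ω] {μ : Measure Ω}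
    {X : Ω → ℝ} (hX : AEMeasurable X μ) {pdf : ℝ → ℝ} (hpdf : Measurable pdf)
    (hdensity : μ.map X = volume.withDensity (fun x => ENNReal.ofReal (pdf x)))
    {s : Set ℝ} (hs : MeasurableSet s) {c : ℝ} (hc : ∀ x ∈ s, c ≤ pdf x)
    {g : ℝ → ℝ} (hg : 0 ≤ g) (hgi : Integrable g (μ.map X)) :
    c * ∫ x in s, g x ≤ ∫ ω, g (X ω) ∂μ := by
  have h_law : ∫ ω, g (X ω) ∂μ = ∫ x, max (pdf x) 0 * g x := by
    rw [← integral_map hX hgi.aestronglyMeasurable, hdensity]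
    exact integral_withDensity_eq_integral_smul hpdf.real_toNNReal g
  have hi : Integrable (fun x => max (pdf x) 0 * g x) := by
    rw [hdensity] at hgi
    exact (integrable_withDensity_iff_integrable_smul hpdf.real_toNNReal).1 hgi
  by_cases hgs : IntegrableOn g s
  · rw [h_law, ← integral_const_mul]
    calc ∫ x in s, c * g x ≤ ∫ x in s, max (pdf x) 0 * g x :=
          setIntegral_mono_on (hgs.const_mul c) hi.integrableOn hs fun x hx =>
            mul_le_mul_of_nonneg_right (le_max_of_le_left (hc x hx)) (hg x)
      _ ≤ ∫ x, max (pdf x) 0 * g x :=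
          setIntegral_le_integral hi (ae_of_all _ fun x => mul_nonneg (le_max_right _ _) (hg x))
  · -- the set integral then takes the junk value `0`
    rw [integral_undef hgs, mul_zero]
    exact integral_nonneg fun ω => hg (X ω)

lemma integral_hinge_convex_gain {Ω : Type*} [MeasurableSpace Ω] {μ : Measure Ω}
    [IsFiniteMeasure μ] {X : Ω → ℝ} (hX : AEMeasurable X μ) {a : ℝ} (ha : ∀ ω, a ≤ X ω)
    {pdf : ℝ → ℝ} (hpdf : Measurable pdf)
    (hdensity : μ.map X = volume.withDensity (fun x => ENNReal.ofReal (pdf x)))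
    {pmin : ℝ} (hlb : ∀ x ∈ Icc (0 : ℝ) 1, pmin ≤ pdf x) {l b₁ b₂ : ℝ} (hl : l ∈ Icc (0 : ℝ) 1)
    (hb₁ : b₁ ∈ Icc (0 : ℝ) 1) (hb₂ : b₂ ∈ Icc (0 : ℝ) 1) :
    ∫ ω, max (l * b₁ + (1 - l) * b₂ - X ω) 0 ∂μ + pmin * (l * (1 - l) * (b₁ - b₂) ^ 2 / 2)
      ≤ l * ∫ ω, max (b₁ - X ω) 0 ∂μ + (1 - l) * ∫ ω, max (b₂ - X ω) 0 ∂μ := by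
  have hi := integrable_hinge_comp hX ha
  have hi₁₂ : Integrable (fun ω => l * max (b₁ - X ω) 0 + (1 - l) * max (b₂ - X ω) 0) μ :=
    ((hi b₁).const_mul l).add ((hi b₂).const_mul (1 - l))
  have h_gap : ∫ ω, hingeGap l b₁ b₂ (X ω) ∂μ = l * ∫ ω, max (b₁ - X ω) 0 ∂μ
      + (1 - l) * ∫ ω, max (b₂ - X ω) 0 ∂μ - ∫ ω, max (l * b₁ + (1 - l) * b₂ - X ω) 0 ∂μ := by
    unfold hingeGap
    rw [integral_sub hi₁₂ (hi _),
      integral_add ((hi b₁).const_mul l) ((hi b₂).const_mul (1 - l)),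
      integral_const_mul, integral_const_mul]
  have h_gapi : Integrable (hingeGap l b₁ b₂) (μ.map X) :=
    (integrable_map_measure (continuous_hingeGap l b₁ b₂).aestronglyMeasurable hX).2
      (hi₁₂.sub (hi _))
  have h_gain := mul_setIntegral_le_integral_of_density hX hpdf hdensity measurableSet_Ioc
    (fun x hx => hlb x (Ioc_subset_Icc_self hx)) (hingeGap_nonneg hl b₁ b₂) h_gapi
  rw [← intervalIntegral.integral_of_le zero_le_one, integral_hingeGap hl hb₁ hb₂,
    h_gap] at h_gain
  linarith

theorem cvar_objective_strongly_convex_general {Ω : Type*} [MeasurableSpace Ω]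
    (μ : Measure Ω) [IsProbabilityMeasure μ]
    (τ pmin : ℝ) (hτ : τ ∈ Set.Ioc (0:ℝ) 1)
    (X : Ω → ℝ) (hXmeas : Measurable X) (hX01 : ∀ ω, X ω ∈ Set.Icc (0:ℝ) 1)
    (pdf : ℝ → ℝ) (hpdfmeas : Measurable pdf)
    (hdensity : Measure.map X μ = volume.withDensity (fun x => ENNReal.ofReal (pdf x)))
    (hlb : ∀ x ∈ Set.Icc (0:ℝ) 1, pmin ≤ pdf x) :
    ∀ b₁ ∈ Set.Icc (0:ℝ) 1, ∀ b₂ ∈ Set.Icc (0:ℝ) 1, ∀ l ∈ Set.Icc (0:ℝ) 1,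
      (τ⁻¹ * ∫ ω, max ((l*b₁ + (1-l)*b₂) - X ω) 0 ∂μ - (l*b₁ + (1-l)*b₂))
        ≤ l * (τ⁻¹ * ∫ ω, max (b₁ - X ω) 0 ∂μ - b₁)
          + (1-l) * (τ⁻¹ * ∫ ω, max (b₂ - X ω) 0 ∂μ - b₂)
          - (pmin/(2*τ)) * l * (1-l) * (b₁ - b₂)^2 := by
  intro b₁ hb₁ b₂ hb₂ l hl
  have h_gain := integral_hinge_convex_gain hXmeas.aemeasurable (fun ω => (hX01 ω).1)
    hpdfmeas hdensity hlb hl hb₁ hb₂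
  linear_combination mul_le_mul_of_nonneg_left h_gain (inv_nonneg.2 hτ.1.le)

/-- If `X` takes values in `[0,1]` and its law has a density bounded below by `p_min > 0`
on `[0,1]`, then `f(b) = τ⁻¹ E[(b − X)⁺] − b` is `(p_min/τ)`-strongly convex on `[0,1]`. -/
theorem cvar_objective_strongly_convex {Ω : Type*} [MeasurableSpace Ω]
    (μ : Measure Ω) [IsProbabilityMeasure μ]
    (τ pmin : ℝ) (hτ : τ ∈ Set.Ioc (0:ℝ) 1) (hpmin : 0 < pmin)
    (X : Ω → ℝ) (hXmeas : Measurable X) (hX01 : ∀ ω, X ω ∈ Set.Icc (0:ℝ) 1)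
    (pdf : ℝ → ℝ) (hpdfmeas : Measurable pdf)
    (hdensity : Measure.map X μ = volume.withDensity (fun x => ENNReal.ofReal (pdf x)))
    (hlb : ∀ x ∈ Set.Icc (0:ℝ) 1, pmin ≤ pdf x) :
    ∀ b₁ ∈ Set.Icc (0:ℝ) 1, ∀ b₂ ∈ Set.Icc (0:ℝ) 1, ∀ l ∈ Set.Icc (0:ℝ) 1,
      (τ⁻¹ * ∫ ω, max ((l*b₁ + (1-l)*b₂) - X ω) 0 ∂μ - (l*b₁ + (1-l)*b₂))
        ≤ l * (τ⁻¹ * ∫ ω, max (b₁ - X ω) 0 ∂μ - b₁)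
          + (1-l) * (τ⁻¹ * ∫ ω, max (b₂ - X ω) 0 ∂μ - b₂)
          - (pmin/(2*τ)) * l * (1-l) * (b₁ - b₂)^2 :=
  cvar_objective_strongly_convex_general μ τ pmin hτ X hXmeas hX01 pdf hpdfmeas hdensity hlb
end

section
/- (Elliptical potential / pigeonhole, reciprocal square-root counts) Let 𝒳 be a finite set with |𝒳| = M, let K ≥ 1, and let x₁, …, x_K be any sequence in 𝒳. Define the visitation counts N_k(x) = max(1, #{i < k : x_i = x}). Then Σ_{k=1}^K 1/√(N_k(x_k)) ≤ √(K · M(2 + log K)). -/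
/-!
By Cauchy–Schwarz, `∑ₖ 1/√Nₖ ≤ √(K · ∑ₖ 1/Nₖ)`, so it suffices to bound `∑ₖ 1/Nₖ` by
`M (2 + log K)`. Group the episodes by the visited point: along the `n` visits to a fixed
point the numbers of earlier visits run through `0, 1, …, n - 1`, so that point contributes
`1 + H_{n-1} ≤ 2 + log n ≤ 2 + log K`.
-/

open Finset

namespace Finset

variable {α β : Type*} [LinearOrder α] [AddCommMonoid β]

theorem sum_card_filter_lt_eq_sum_range (s : Finset α) (f : ℕ → β) :
    ∑ k ∈ s, f #{i ∈ s | i < k} = ∑ j ∈ range #s, f j := by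
  induction s using Finset.induction_on_max with
  | empty => simp
  | insert a s ha ih =>
    have hnot : a ∉ s := fun h => lt_irrefl a (ha a h)
    have hrank_a : {i ∈ insert a s | i < a} = s := by
      ext i
      simp only [mem_filter, mem_insert]
      exact ⟨fun ⟨h, hi⟩ => h.resolve_left hi.ne, fun h => ⟨Or.inr h, ha i h⟩⟩
    have hrank_s : ∀ k ∈ s, {i ∈ insert a s | i < k} = {i ∈ s | i < k} := fun k hk => by
      rw [filter_insert, if_neg (ha k hk).not_gt]
    rw [sum_insert hnot, hrank_a, sum_congr rfl fun k hk => by rw [hrank_s k hk], ih,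
      card_insert_of_notMem hnot, sum_range_succ, add_comm]

end Finset

theorem Real.log_natCast_le_log_natCast {m n : ℕ} (h : m ≤ n) : Real.log m ≤ Real.log n := by
  rcases m.eq_zero_or_pos with rfl | hm
  · simpa using Real.log_natCast_nonneg n
  · exact Real.log_le_log (by exact_mod_cast hm) (by exact_mod_cast h)

theorem sum_range_inv_max_one_le_two_add_log (n : ℕ) :
    ∑ j ∈ range n, (1 : ℝ) / (max 1 j : ℕ) ≤ 2 + Real.log n := by
  cases n with
  | zero => simp
  | succ m =>
    have hharmonic : ∑ j ∈ range m, (1 : ℝ) / (max 1 (j + 1) : ℕ) = harmonic m := by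
      simp [harmonic]
    have hlog := Real.log_natCast_le_log_natCast m.le_succ
    rw [sum_range_succ', hharmonic]
    have hharmonic_le := harmonic_le_one_add_log m
    norm_num at hlog ⊢
    linarith

section Visits

variable {ι α : Type*} [Fintype ι] [LinearOrder ι] [Fintype α] [DecidableEq α]

def priorVisits (x : ι → α) (k : ι) : ℕ := #{i | i < k ∧ x i = x k}

theorem sum_priorVisits_eq_sum_range {β : Type*} [AddCommMonoid β]
    (x : ι → α) (f : ℕ → β) :
    ∑ k, f (priorVisits x k) = ∑ v, ∑ j ∈ range #{k | x k = v}, f j := by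
  rw [← sum_fiberwise univ x]
  refine sum_congr rfl fun v _ => ?_
  rw [← sum_card_filter_lt_eq_sum_range]
  refine sum_congr rfl fun k hk => ?_
  rw [mem_filter] at hk
  rw [priorVisits, filter_filter, hk.2]
  simp_rw [and_comm]

theorem sum_inv_max_one_priorVisits_le (x : ι → α) :
    ∑ k, (1 : ℝ) / (max 1 (priorVisits x k) : ℕ)
      ≤ Fintype.card α * (2 + Real.log (Fintype.card ι)) := by
  rw [sum_priorVisits_eq_sum_range x fun j => (1 : ℝ) / (max 1 j : ℕ)]
  calc ∑ v, ∑ j ∈ range #{k | x k = v}, (1 : ℝ) / (max 1 j : ℕ)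
      ≤ ∑ _v : α, (2 + Real.log (Fintype.card ι)) := by
        refine sum_le_sum fun v _ => (sum_range_inv_max_one_le_two_add_log _).trans ?_
        gcongr 2 + ?_
        exact Real.log_natCast_le_log_natCast (card_le_univ _)
    _ = Fintype.card α * (2 + Real.log (Fintype.card ι)) := by
        rw [sum_const, card_univ, nsmul_eq_mul]

end Visits

theorem Real.sum_sqrt_le_sqrt_card_mul_sum {ι : Type*} (s : Finset ι) {f : ι → ℝ}
    (hf : ∀ i, 0 ≤ f i) : ∑ i ∈ s, √(f i) ≤ √(#s * ∑ i ∈ s, f i) := by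
  simpa [Real.sqrt_mul (Nat.cast_nonneg _)] using
    Real.sum_sqrt_mul_sqrt_le s (fun _ => zero_le_one) hf

theorem elliptical_potential_reciprocal_sqrt_general {𝒳 : Type*} [Fintype 𝒳] [DecidableEq 𝒳]
    (M K : ℕ) (hM : Fintype.card 𝒳 = M) (x : Fin K → 𝒳) :
    ∑ k : Fin K,
        (1 : ℝ) / Real.sqrt ((max 1 ((Finset.univ.filter (fun i : Fin K => i < k ∧ x i = x k)).card) : ℕ) : ℝ)
      ≤ Real.sqrt (K * (M * (2 + Real.log K))) := by
  have hsum := sum_inv_max_one_priorVisits_le x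
  rw [hM, Fintype.card_fin] at hsum
  calc ∑ k, (1 : ℝ) / √((max 1 (priorVisits x k) : ℕ) : ℝ)
      = ∑ k, √((1 : ℝ) / (max 1 (priorVisits x k) : ℕ)) := by simp [Real.sqrt_inv]
    _ ≤ √(K * ∑ k, (1 : ℝ) / (max 1 (priorVisits x k) : ℕ)) := by
        simpa using Real.sum_sqrt_le_sqrt_card_mul_sum univ
          (f := fun k => (1 : ℝ) / (max 1 (priorVisits x k) : ℕ)) fun k => by positivity
    _ ≤ √(K * (M * (2 + Real.log K))) := by gcongr

/-- Elliptical potential / pigeonhole (reciprocal square-root counts): for any sequence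
`x₁, …, x_K` in a finite set of size `M`, with visitation counts
`N_k(x) = max(1, #{i < k : xᵢ = x})`, `Σ_{k=1}^K 1/√(N_k(x_k)) ≤ √(K·M(2 + log K))`. -/
theorem elliptical_potential_reciprocal_sqrt {𝒳 : Type*} [Fintype 𝒳] [DecidableEq 𝒳]
    (M K : ℕ) (hM : Fintype.card 𝒳 = M) (hK : 1 ≤ K) (x : Fin K → 𝒳) :
    ∑ k : Fin K,
        (1 : ℝ) / Real.sqrt ((max 1 ((Finset.univ.filter (fun i : Fin K => i < k ∧ x i = x k)).card) : ℕ) : ℝ)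
      ≤ Real.sqrt (K * (M * (2 + Real.log K))) :=
  elliptical_potential_reciprocal_sqrt_general M K hM x
end

section
/- (Sequential law of total conditional variance) Let (Ω, ℱ, P) be a probability space, let 𝒢₀ ⊆ 𝒢₁ ⊆ … ⊆ 𝒢_N ⊆ ℱ be an increasing sequence of sub-σ-algebras, and let Y be a square-integrable random variable. Then almost surely Var(Y | 𝒢₀) = E[Var(Y | 𝒢_N) | 𝒢₀] + Σ_{t=1}^N E[Var(E[Y | 𝒢_t] | 𝒢_{t−1}) | 𝒢₀]. -/
/-!
For `𝒢 ⊆ 𝒢'`, expanding `Var(Z | 𝒢) = E[Z² | 𝒢] − E[Z | 𝒢]²` and using the tower property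
`E[E[· | 𝒢'] | 𝒢] = E[· | 𝒢]` gives the one-step conditional law of total variance
`Var(Y | 𝒢) = E[Var(Y | 𝒢') | 𝒢] + Var(E[Y | 𝒢'] | 𝒢)`. Applying it to `𝒢_t ⊆ 𝒢_{t+1}`,
conditioning on `𝒢₀` and using the tower property once more, the sequential law follows by
induction on `N`.
-/

open MeasureTheory ProbabilityTheory Filter

namespace ProbabilityTheory

variable {Ω : Type*} {m₀ m₁ m₂ : MeasurableSpace Ω} {μ : Measure[m₀] Ω} [IsFiniteMeasure μ]
  {X : Ω → ℝ}

lemma condVar_ae_eq_condExp_condVar_add_condVar_condExp (h₁₂ : m₁ ≤ m₂) (h₂ : m₂ ≤ m₀)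
    (hX : MemLp X 2 μ) :
    Var[X; μ | m₁] =ᵐ[μ] μ[Var[X; μ | m₂] | m₁] + Var[μ[X | m₂]; μ | m₁] := by
  have hX₂ : MemLp (μ[X | m₂]) 2 μ := hX.condExp one_le_two
  have hvar₂ : μ[Var[X; μ | m₂] | m₁] =ᵐ[μ] μ[X ^ 2 | m₁] - μ[μ[X | m₂] ^ 2 | m₁] :=
    calc μ[Var[X; μ | m₂] | m₁]
      _ =ᵐ[μ] μ[μ[X ^ 2 | m₂] - μ[X | m₂] ^ 2 | m₁] :=
          condExp_congr_ae (condVar_ae_eq_condExp_sq_sub_sq_condExp h₂ hX)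
      _ =ᵐ[μ] μ[μ[X ^ 2 | m₂] | m₁] - μ[μ[X | m₂] ^ 2 | m₁] :=
          condExp_sub integrable_condExp hX₂.integrable_sq m₁
      _ =ᵐ[μ] μ[X ^ 2 | m₁] - μ[μ[X | m₂] ^ 2 | m₁] :=
          (condExp_condExp_of_le h₁₂ h₂).sub EventuallyEq.rfl
  filter_upwards [condVar_ae_eq_condExp_sq_sub_sq_condExp (h₁₂.trans h₂) hX, hvar₂,
    condVar_ae_eq_condExp_sq_sub_sq_condExp (h₁₂.trans h₂) hX₂,
    condExp_condExp_of_le (f := X) (μ := μ) h₁₂ h₂] with ω hvar hvar₂ hvarExp htower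
  simp only [Pi.add_apply, Pi.sub_apply, Pi.pow_apply] at hvar hvar₂ hvarExp htower ⊢
  rw [hvar, hvar₂, hvarExp, htower]
  ring

lemma condVar_ae_eq_condExp_condVar_add_sum_condExp_condVar_condExp {G : ℕ → MeasurableSpace Ω}
    (hG : Monotone G) (hle : ∀ i, G i ≤ m₀) (hX : MemLp X 2 μ) (n : ℕ) :
    Var[X; μ | G 0] =ᵐ[μ] μ[Var[X; μ | G n] | G 0]
      + ∑ t ∈ Finset.range n, μ[Var[μ[X | G (t + 1)]; μ | G t] | G 0] := by
  induction n with
  | zero =>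
    rw [Finset.sum_range_zero, add_zero,
      condExp_of_stronglyMeasurable (hle 0) stronglyMeasurable_condVar integrable_condVar]
  | succ n ih =>
    have hstep : μ[Var[X; μ | G n] | G 0] =ᵐ[μ]
        μ[Var[X; μ | G (n + 1)] | G 0] + μ[Var[μ[X | G (n + 1)]; μ | G n] | G 0] :=
      calc μ[Var[X; μ | G n] | G 0]
        _ =ᵐ[μ] μ[μ[Var[X; μ | G (n + 1)] | G n] + Var[μ[X | G (n + 1)]; μ | G n] | G 0] :=
            condExp_congr_ae (condVar_ae_eq_condExp_condVar_add_condVar_condExp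
              (hG n.le_succ) (hle _) hX)
        _ =ᵐ[μ] μ[μ[Var[X; μ | G (n + 1)] | G n] | G 0]
              + μ[Var[μ[X | G (n + 1)]; μ | G n] | G 0] :=
            condExp_add integrable_condExp integrable_condVar _
        _ =ᵐ[μ] μ[Var[X; μ | G (n + 1)] | G 0] + μ[Var[μ[X | G (n + 1)]; μ | G n] | G 0] :=
            (condExp_condExp_of_le (hG n.zero_le) (hle n)).add EventuallyEq.rfl
    filter_upwards [ih, hstep] with ω hω hstepω
    simp only [Pi.add_apply, Finset.sum_apply, Finset.sum_range_succ] at hω hstepω ⊢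
    rw [hω, hstepω]
    ring

end ProbabilityTheory

/-- Sequential law of total conditional variance: for an increasing sequence of sub-σ-algebras
`𝒢₀ ⊆ 𝒢₁ ⊆ … ⊆ 𝒢_N ⊆ ℱ` and a square-integrable random variable `Y`, almost surely
`Var(Y | 𝒢₀) = E[Var(Y | 𝒢_N) | 𝒢₀] + Σ_{t=1}^N E[Var(E[Y | 𝒢_t] | 𝒢_{t−1}) | 𝒢₀]`,
where `Var(Z | 𝒢) = E[Z² | 𝒢] − (E[Z | 𝒢])²`. -/
theorem sequential_law_of_total_conditional_variance
    {Ω : Type*} {m : MeasurableSpace Ω} (μ : Measure Ω) [IsProbabilityMeasure μ]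
    (N : ℕ) (G : ℕ → MeasurableSpace Ω) (hmono : ∀ i j, i ≤ j → G i ≤ G j)
    (hle : ∀ i, G i ≤ m) (Y : Ω → ℝ) (hY : MemLp Y 2 μ) :
    ∀ᵐ ω ∂μ,
      (μ[fun ω' => (Y ω')^2 | G 0]) ω - ((μ[Y | G 0]) ω)^2
        = (μ[fun ω' => (μ[fun ω'' => (Y ω'')^2 | G N]) ω' - ((μ[Y | G N]) ω')^2 | G 0]) ω
          + ∑ t ∈ Finset.range N,
            (μ[fun ω' => (μ[fun ω'' => ((μ[Y | G (t+1)]) ω'')^2 | G t]) ω'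
                - ((μ[μ[Y | G (t+1)] | G t]) ω')^2 | G 0]) ω := by
  have hvar (i : ℕ) := condVar_ae_eq_condExp_sq_sub_sq_condExp (hle i) hY
  have hvarSteps : ∀ᵐ ω ∂μ, ∀ t, (μ[Var[μ[Y | G (t + 1)]; μ | G t] | G 0]) ω =
      (μ[μ[μ[Y | G (t + 1)] ^ 2 | G t] - μ[μ[Y | G (t + 1)] | G t] ^ 2 | G 0]) ω :=
    ae_all_iff.2 fun t => condExp_congr_ae
      (condVar_ae_eq_condExp_sq_sub_sq_condExp (hle t) (hY.condExp one_le_two))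
  filter_upwards [condVar_ae_eq_condExp_condVar_add_sum_condExp_condVar_condExp
      (fun i j => hmono i j) hle hY N, hvar 0, condExp_congr_ae (m := G 0) (hvar N), hvarSteps]
    with ω hlaw hvar₀ hvarN hvarStep
  simp only [Pi.add_apply, Finset.sum_apply] at hlaw
  rw [hlaw, hvarN, Finset.sum_congr rfl fun t _ => hvarStep t] at hvar₀
  exact hvar₀.symm
end

section
/- (Multiplicative Azuma) Let (ℱ_t)_{t=0}^N be a filtration and let X₁, …, X_N be random variables with values in [0,1] such that X_t is ℱ_t-measurable for each t. Then for any δ ∈ (0,1), with probability at least 1 − δ, Σ_{t=1}^N E[X_t | ℱ_{t−1}] ≤ 2 Σ_{t=1}^N X_t + 2 log(1/δ). -/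
/-!
Writing `g_t = E[Y_t | ℱ_t]` for a `[0,1]`-valued `Y_t` measurable w.r.t. `ℱ_{t+1}`, the bound
`exp (-y) ≤ 1 - y / 2 ≤ exp (-y / 2)` on `[0,1]` gives `E[exp (-Y_t) | ℱ_t] ≤ exp (-g_t / 2)`.
Hence `exp (∑_{t<n} (g_t / 2 - Y_t))` is a supermartingale starting at `1`, so its expectation is at
most `1`, and Markov's inequality at level `1/δ` bounds the probability that
`∑ g_t / 2 - ∑ Y_t ≥ log (1/δ)` by `δ`.
-/

open MeasureTheory ProbabilityTheory Real Finset

lemma exp_neg_le_one_sub_half {x : ℝ} (h0 : 0 ≤ x) (h1 : x ≤ 1) : exp (-x) ≤ 1 - x / 2 :=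
  calc exp (-x) ≤ 1 / (1 + x) := by
        rw [exp_neg, one_div]
        exact inv_anti₀ (by linarith) (by linarith [add_one_le_exp x])
    _ ≤ 1 - x / 2 := by
        rw [div_le_iff₀ (by linarith)]
        nlinarith

section

variable {Ω : Type*} {m₀ : MeasurableSpace Ω} {μ : Measure Ω}

lemma condExp_exp_neg_le_exp_neg_half_condExp [IsFiniteMeasure μ] {m : MeasurableSpace Ω}
    (hm : m ≤ m₀) {Y : Ω → ℝ} (hY : AEMeasurable Y μ) (h01 : ∀ ω, Y ω ∈ Set.Icc 0 1) :
    μ[fun ω => exp (-Y ω) | m] ≤ᵐ[μ] fun ω => exp (-(μ[Y | m] ω / 2)) := by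
  have hYint : Integrable Y μ := .of_mem_Icc 0 1 hY (.of_forall h01)
  have hexpint : Integrable (fun ω => exp (-Y ω)) μ := by
    simpa using integrable_exp_mul_of_mem_Icc (t := -1) hY (.of_forall h01)
  have hlin : μ[fun ω => 1 - Y ω / 2 | m] =ᵐ[μ] fun ω => 1 - μ[Y | m] ω / 2 := by
    have hsplit : (fun ω => 1 - Y ω / 2) = (fun _ => (1 : ℝ)) - (2⁻¹ : ℝ) • Y := by
      ext ω; simp [div_eq_inv_mul]
    rw [hsplit]
    filter_upwards [condExp_sub (integrable_const (1 : ℝ)) (hYint.smul (2⁻¹ : ℝ)) m,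
      condExp_smul (2⁻¹ : ℝ) Y m] with ω h₁ h₂
    simp [h₁, h₂, condExp_const hm, div_eq_inv_mul]
  calc μ[fun ω => exp (-Y ω) | m]
      ≤ᵐ[μ] μ[fun ω => 1 - Y ω / 2 | m] :=
        condExp_mono hexpint ((integrable_const 1).sub (hYint.div_const 2))
          (.of_forall fun ω => exp_neg_le_one_sub_half (h01 ω).1 (h01 ω).2)
    _ =ᵐ[μ] fun ω => 1 - μ[Y | m] ω / 2 := hlin
    _ ≤ᵐ[μ] fun ω => exp (-(μ[Y | m] ω / 2)) :=
        .of_forall fun ω => by linarith [one_sub_le_exp_neg (μ[Y | m] ω / 2)]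

noncomputable def azumaExponent (μ : Measure Ω) (ℱ : Filtration ℕ m₀) (Y : ℕ → Ω → ℝ)
    (n : ℕ) (ω : Ω) : ℝ :=
  ∑ t ∈ range n, (μ[Y t | ℱ t] ω / 2 - Y t ω)

section azumaExponent

variable {ℱ : Filtration ℕ m₀} {Y : ℕ → Ω → ℝ}

lemma azumaExponent_succ (n : ℕ) (ω : Ω) :
    azumaExponent μ ℱ Y (n + 1) ω = azumaExponent μ ℱ Y n ω + (μ[Y n | ℱ n] ω / 2 - Y n ω) :=
  sum_range_succ ..

lemma measurable_azumaExponent (hY : ∀ t, Measurable[ℱ (t + 1)] (Y t)) (n : ℕ) :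
    Measurable[ℱ n] (azumaExponent μ ℱ Y n) := by
  refine Finset.measurable_sum _ fun t ht => ?_
  have hlt : t < n := mem_range.mp ht
  exact ((stronglyMeasurable_condExp.measurable.mono (ℱ.mono hlt.le) le_rfl).div_const 2).sub
    ((hY t).mono (ℱ.mono hlt) le_rfl)

lemma ae_azumaExponent_le (h01 : ∀ t ω, Y t ω ∈ Set.Icc 0 1) (n : ℕ) :
    ∀ᵐ ω ∂μ, azumaExponent μ ℱ Y n ω ≤ n / 2 := by
  have hcond : ∀ᵐ ω ∂μ, ∀ t, μ[Y t | ℱ t] ω ≤ 1 :=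
    ae_all_iff.mpr fun t => condExp_le_nonneg_const zero_le_one (.of_forall fun ω => (h01 t ω).2)
  filter_upwards [hcond] with ω hω
  calc azumaExponent μ ℱ Y n ω ≤ ∑ _t ∈ range n, (1 / 2 : ℝ) :=
        sum_le_sum fun t _ => by linarith [hω t, (h01 t ω).1]
    _ = n / 2 := by simp [div_eq_mul_inv]

lemma integrable_exp_azumaExponent [IsFiniteMeasure μ] (hY : ∀ t, Measurable[ℱ (t + 1)] (Y t))
    (h01 : ∀ t ω, Y t ω ∈ Set.Icc 0 1) (n : ℕ) :
    Integrable (fun ω => exp (azumaExponent μ ℱ Y n ω)) μ := by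
  simpa using integrable_exp_mul_of_le 1 _ zero_le_one
    ((measurable_azumaExponent hY n).mono (ℱ.le n) le_rfl).aemeasurable
    (ae_azumaExponent_le h01 n)

theorem supermartingale_exp_azumaExponent [IsFiniteMeasure μ]
    (hY : ∀ t, Measurable[ℱ (t + 1)] (Y t)) (h01 : ∀ t ω, Y t ω ∈ Set.Icc 0 1) :
    Supermartingale (fun n ω => exp (azumaExponent μ ℱ Y n ω)) ℱ μ := by
  refine supermartingale_nat (fun n => (measurable_azumaExponent hY n).exp.stronglyMeasurable)
    (integrable_exp_azumaExponent hY h01) fun n => ?_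
  set f : Ω → ℝ := fun ω => exp (azumaExponent μ ℱ Y n ω + μ[Y n | ℱ n] ω / 2)
  have hYn : Measurable (Y n) := (hY n).mono (ℱ.le (n + 1)) le_rfl
  have hexp : Integrable (fun ω => exp (-Y n ω)) μ := by
    simpa using integrable_exp_mul_of_mem_Icc (t := -1) hYn.aemeasurable (.of_forall (h01 n))
  have hfactor : (fun ω => exp (azumaExponent μ ℱ Y (n + 1) ω)) = f * fun ω => exp (-Y n ω) := by
    ext ω
    rw [Pi.mul_apply, ← exp_add, azumaExponent_succ]
    ring_nf
  have hf : StronglyMeasurable[ℱ n] f :=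
    ((measurable_azumaExponent hY n).add
      (stronglyMeasurable_condExp.measurable.div_const 2)).exp.stronglyMeasurable
  rw [hfactor]
  filter_upwards [condExp_mul_of_stronglyMeasurable_left hf
      (hfactor ▸ integrable_exp_azumaExponent hY h01 (n + 1))
      hexp,
    condExp_exp_neg_le_exp_neg_half_condExp (ℱ.le n) hYn.aemeasurable (h01 n)] with ω hpull hcond
  calc μ[f * fun ω => exp (-Y n ω) | ℱ n] ω
      = f ω * μ[fun ω => exp (-Y n ω) | ℱ n] ω := hpull
    _ ≤ f ω * exp (-(μ[Y n | ℱ n] ω / 2)) := mul_le_mul_of_nonneg_left hcond (exp_pos _).le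
    _ = exp (azumaExponent μ ℱ Y n ω) := by rw [← exp_add]; ring_nf

theorem integral_exp_azumaExponent_le_one [IsProbabilityMeasure μ]
    (hY : ∀ t, Measurable[ℱ (t + 1)] (Y t)) (h01 : ∀ t ω, Y t ω ∈ Set.Icc 0 1) (n : ℕ) :
    ∫ ω, exp (azumaExponent μ ℱ Y n ω) ∂μ ≤ 1 := by
  simpa [azumaExponent] using
    (supermartingale_exp_azumaExponent (μ := μ) hY h01).setIntegral_le (Nat.zero_le n)
      MeasurableSet.univ

end azumaExponent

lemma one_sub_le_measureReal_lt_log_of_integral_exp_le_one [IsProbabilityMeasure μ]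
    {S : Ω → ℝ} (hint : Integrable (fun ω => exp (S ω)) μ) (hS : ∫ ω, exp (S ω) ∂μ ≤ 1)
    {δ : ℝ} (hδ : 0 < δ) :
    1 - δ ≤ μ.real {ω | S ω < log (1 / δ)} := by
  have htail : μ.real {ω | log (1 / δ) ≤ S ω} ≤ δ :=
    calc μ.real {ω | log (1 / δ) ≤ S ω} ≤ exp (-1 * log (1 / δ)) * mgf S μ 1 :=
          measure_ge_le_exp_mul_mgf _ zero_le_one (by simpa using hint)
      _ ≤ δ * 1 := by
          rw [neg_one_mul, exp_neg, exp_log (by positivity), one_div, inv_inv]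
          exact mul_le_mul_of_nonneg_left (by simpa [mgf] using hS) hδ.le
      _ = δ := mul_one δ
  have hcover : 1 ≤ μ.real {ω | S ω < log (1 / δ)} + μ.real {ω | log (1 / δ) ≤ S ω} :=
    calc (1 : ℝ) = μ.real ({ω | S ω < log (1 / δ)} ∪ {ω | log (1 / δ) ≤ S ω}) := by
          rw [← probReal_univ (μ := μ)]
          congr 1
          ext ω
          simp [lt_or_ge]
      _ ≤ _ := measureReal_union_le _ _
  linarith

end

/-- Multiplicative Azuma: for adapted random variables `X₁, …, X_N` with values in `[0,1]`
(`X_t` being `ℱ_t`-measurable), for any `δ ∈ (0,1)`, with probability at least `1 − δ`,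
`Σ_{t=1}^N E[X_t | ℱ_{t−1}] ≤ 2 Σ_{t=1}^N X_t + 2 log(1/δ)`. -/
theorem multiplicative_azuma {Ω : Type*} {m : MeasurableSpace Ω}
    (μ : Measure Ω) [IsProbabilityMeasure μ]
    (N : ℕ) (F : ℕ → MeasurableSpace Ω) (hmono : ∀ i j, i ≤ j → F i ≤ F j)
    (hle : ∀ i, F i ≤ m)
    (X : ℕ → Ω → ℝ) (hadapted : ∀ t, Measurable[F (t+1)] (X (t+1)))
    (hbound : ∀ t ω, X t ω ∈ Set.Icc (0:ℝ) 1)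
    (δ : ℝ) (hδ : δ ∈ Set.Ioo (0:ℝ) 1) :
    (1 - δ : ℝ) ≤ (μ {ω | ∑ t ∈ Finset.range N, (μ[X (t+1) | F t]) ω
        ≤ 2 * ∑ t ∈ Finset.range N, X (t+1) ω + 2 * Real.log (1/δ)}).toReal := by
  let ℱ : Filtration ℕ m := ⟨F, fun i j => hmono i j, hle⟩
  have hY : ∀ t, Measurable[ℱ (t + 1)] (X (t + 1)) := hadapted
  have hY01 : ∀ t ω, X (t + 1) ω ∈ Set.Icc 0 1 := fun t => hbound (t + 1)
  refine (one_sub_le_measureReal_lt_log_of_integral_exp_le_one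
    (integrable_exp_azumaExponent hY hY01 N) (integral_exp_azumaExponent_le_one hY hY01 N)
    hδ.1).trans (measureReal_mono fun ω hω => ?_)
  simp only [Set.mem_ofPred_eq, azumaExponent, sum_sub_distrib, ← sum_div] at hω ⊢
  linarith
end

section
/- Let 𝒮 be a finite set with |𝒮| = S, let P and Q be probability distributions on 𝒮, let c > 0 and let H ≥ 1 be a real number. Suppose that for every s ∈ 𝒮, |Q(s) − P(s)| ≤ √(2 P(s) c) + c. Then for every function f : 𝒮 → [0,1], |Σ_{s ∈ 𝒮} (Q(s) − P(s)) f(s)| ≤ (1/H) Σ_{s ∈ 𝒮} P(s) f(s) + S·H·c + S·c. -/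
/-- If `P, Q` are probability distributions on a finite set of size `S` with
`|Q(s) − P(s)| ≤ √(2 P(s) c) + c` for every `s`, then for every `f : 𝒮 → [0,1]`,
`|Σ_s (Q(s) − P(s)) f(s)| ≤ (1/H) Σ_s P(s) f(s) + S·H·c + S·c`. -/
theorem projected_distribution_error_bound {𝒮 : Type*} [Fintype 𝒮]
    (S : ℕ) (hS : Fintype.card 𝒮 = S)
    (P Q : 𝒮 → ℝ) (hP0 : ∀ s, 0 ≤ P s) (hP1 : ∑ s, P s = 1)
    (hQ0 : ∀ s, 0 ≤ Q s) (hQ1 : ∑ s, Q s = 1)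
    (c H : ℝ) (hc : 0 < c) (hH : 1 ≤ H)
    (hclose : ∀ s, |Q s - P s| ≤ Real.sqrt (2 * P s * c) + c) :
    ∀ f : 𝒮 → ℝ, (∀ s, f s ∈ Set.Icc (0:ℝ) 1) →
      |∑ s, (Q s - P s) * f s| ≤ (1/H) * ∑ s, P s * f s + S * H * c + S * c := by
  intro f hf
  have hH0 : (0:ℝ) < H := lt_of_lt_of_le one_pos hH
  have key : ∀ s, |(Q s - P s) * f s| ≤ (1/H) * (P s * f s) + H * c + c := by
    intro s
    obtain ⟨hf0, hf1⟩ := hf s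
    have hPs := hP0 s
    have hsq : Real.sqrt (2 * P s * c) ≤ P s / (2 * H) + H * c := by
      have h3 : 2 * P s * c ≤ (P s / (2 * H) + H * c) ^ 2 := by
        have he : (P s / (2 * H) + H * c) ^ 2 - 2 * P s * c
            = (P s / (2 * H) - H * c) ^ 2 := by
          field_simp
          ring
        nlinarith [sq_nonneg (P s / (2 * H) - H * c)]
      have hnn : 0 ≤ P s / (2 * H) + H * c :=
        add_nonneg (div_nonneg hPs (by linarith)) (mul_nonneg hH0.le hc.le)
      calc Real.sqrt (2 * P s * c) ≤ Real.sqrt ((P s / (2 * H) + H * c) ^ 2) :=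
            Real.sqrt_le_sqrt h3
        _ = P s / (2 * H) + H * c := Real.sqrt_sq hnn
    have h1 : P s / (2 * H) * f s = (1/2) * ((1/H) * (P s * f s)) := by
      field_simp
    have h2 : 0 ≤ (1/H) * (P s * f s) := by
      apply mul_nonneg (by positivity) (mul_nonneg hPs hf0)
    calc |(Q s - P s) * f s| = |Q s - P s| * f s := by
          rw [abs_mul, abs_of_nonneg hf0]
      _ ≤ (Real.sqrt (2 * P s * c) + c) * f s :=
          mul_le_mul_of_nonneg_right (hclose s) hf0
      _ ≤ (P s / (2 * H) + H * c + c) * f s := by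
          apply mul_le_mul_of_nonneg_right _ hf0; linarith
      _ ≤ (1/H) * (P s * f s) + H * c + c := by
          have hHc : H * c * f s ≤ H * c :=
            mul_le_of_le_one_right (mul_nonneg hH0.le hc.le) hf1
          have hcf : c * f s ≤ c := mul_le_of_le_one_right hc.le hf1
          nlinarith
  calc |∑ s, (Q s - P s) * f s| ≤ ∑ s, |(Q s - P s) * f s| := Finset.abs_sum_le_sum_abs _ _
    _ ≤ ∑ s, ((1/H) * (P s * f s) + H * c + c) := Finset.sum_le_sum fun s _ => key s
    _ = (1/H) * ∑ s, P s * f s + S * H * c + S * c := by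
        rw [Finset.sum_add_distrib, Finset.sum_add_distrib, ← Finset.mul_sum,
          Finset.sum_const, Finset.sum_const, Finset.card_univ, hS]
        push_cast; ring
end

section
/- Let X and Y be random variables with values in [0,1], with CDFs F_X and F_Y respectively, let c ≥ 0 and τ ∈ (0,1]. Suppose that for every t ∈ ℝ, F_Y(t) ≤ F_X(t) ≤ F_Y(t + c). Then: (1) for every b ∈ [0,1], 0 ≤ E[(b − X)⁺] − E[(b − Y)⁺] ≤ c; and (2) 0 ≤ CVaR_τ(Y) − CVaR_τ(X) ≤ τ⁻¹ c. -/
/-!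
By the layer-cake formula, `E[(b - Z)⁺] = ∫₀^M F_Z(b - t) dt` for `Z ≥ 0` and `M` large, so the
CDF sandwich integrates to `E[(b - Y)⁺] ≤ E[(b - X)⁺] ≤ E[(b + c - Y)⁺]`, and the right end is at
most `E[(b - Y)⁺] + c` because `b ↦ (b - y)⁺` is 1-Lipschitz. Hence the CVaR objectives
`b - τ⁻¹ E[(b - ·)⁺]` of `X` and `Y` differ by between `0` and `τ⁻¹ c` at every `b`, and so do their
suprema over `[0, 1]`.
-/

open MeasureTheory Set

lemma csSup_image_le_csSup_image_add {α : Type*} {s : Set α} {f g : α → ℝ} {d : ℝ}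
    (hs : s.Nonempty) (hg : BddAbove (g '' s)) (h : ∀ x ∈ s, f x ≤ g x + d) :
    sSup (f '' s) ≤ sSup (g '' s) + d :=
  csSup_le (hs.image f) <| forall_mem_image.2 fun x hx =>
    (h x hx).trans (add_le_add_left (le_csSup hg (mem_image_of_mem g hx)) d)

section

variable {Ω : Type*} [MeasurableSpace Ω] {μ : Measure Ω} {Z : Ω → ℝ}

lemma integrable_max_sub_of_nonneg [IsFiniteMeasure μ] (hZ : Measurable Z) (hZ0 : ∀ ω, 0 ≤ Z ω)
    (b : ℝ) : Integrable (fun ω => max (b - Z ω) 0) μ := by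
  refine .of_bound ((measurable_const.sub hZ).max measurable_const).aestronglyMeasurable |b|
    (.of_forall fun ω => ?_)
  rw [Real.norm_eq_abs, abs_of_nonneg (le_max_right _ _)]
  exact max_le (by linarith [le_abs_self b, hZ0 ω]) (abs_nonneg b)

lemma integral_max_sub_eq_setIntegral_cdf [IsFiniteMeasure μ] (hZ : Measurable Z)
    (hZ0 : ∀ ω, 0 ≤ Z ω) {b M : ℝ} (hbM : b ≤ M) (hM : 0 ≤ M) :
    ∫ ω, max (b - Z ω) 0 ∂μ = ∫ t in Ioc 0 M, μ.real {ω | Z ω ≤ b - t} := by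
  rw [(integrable_max_sub_of_nonneg hZ hZ0 b).integral_eq_integral_Ioc_meas_le
    (.of_forall fun ω => le_max_right _ _)
    (.of_forall fun ω => max_le (by linarith [hZ0 ω]) hM)]
  refine setIntegral_congr_fun measurableSet_Ioc fun t ht => ?_
  congr 1
  ext ω
  simp only [mem_ofPred_eq, le_max_iff, ht.1.not_ge, or_false, le_sub_comm]

lemma integrableOn_measureReal_le_sub [IsFiniteMeasure μ] (a M : ℝ) :
    IntegrableOn (fun t => μ.real {ω | Z ω ≤ a - t}) (Ioc 0 M) := by
  have hanti : Antitone fun t => μ.real {ω | Z ω ≤ a - t} := fun s t hst =>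
    measureReal_mono fun ω (hω : Z ω ≤ a - t) => show Z ω ≤ a - s by linarith
  exact (hanti.locallyIntegrable.integrableOn_isCompact isCompact_Icc).mono_set Ioc_subset_Icc_self

lemma integral_max_sub_le_of_cdf_le_add [IsFiniteMeasure μ] {X Y : Ω → ℝ}
    (hX : Measurable X) (hY : Measurable Y) (hX0 : ∀ ω, 0 ≤ X ω) (hY0 : ∀ ω, 0 ≤ Y ω)
    {c : ℝ} (hXY : ∀ t, μ.real {ω | X ω ≤ t} ≤ μ.real {ω | Y ω ≤ t + c}) (b : ℝ) :
    ∫ ω, max (b - X ω) 0 ∂μ ≤ ∫ ω, max (b + c - Y ω) 0 ∂μ := by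
  set M := max (max b (b + c)) 0
  have hM : 0 ≤ M := le_max_right _ _
  rw [integral_max_sub_eq_setIntegral_cdf hX hX0 (by simp [M]) hM,
    integral_max_sub_eq_setIntegral_cdf hY hY0 (by simp [M]) hM]
  refine setIntegral_mono_on (integrableOn_measureReal_le_sub _ _)
    (integrableOn_measureReal_le_sub _ _) measurableSet_Ioc fun t _ => ?_
  simpa only [sub_add_eq_add_sub] using hXY (b - t)

lemma integral_max_add_sub_le [IsProbabilityMeasure μ] (hZ : Measurable Z) (hZ0 : ∀ ω, 0 ≤ Z ω)
    (b : ℝ) {c : ℝ} (hc : 0 ≤ c) :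
    ∫ ω, max (b + c - Z ω) 0 ∂μ ≤ ∫ ω, max (b - Z ω) 0 ∂μ + c := by
  have hint := integrable_max_sub_of_nonneg (μ := μ) hZ hZ0 b
  calc ∫ ω, max (b + c - Z ω) 0 ∂μ ≤ ∫ ω, (max (b - Z ω) 0 + c) ∂μ :=
        integral_mono (integrable_max_sub_of_nonneg hZ hZ0 _) (hint.add (integrable_const c))
          fun ω => max_le (by linarith [le_max_left (b - Z ω) 0])
            (by linarith [le_max_right (b - Z ω) 0])
    _ = ∫ ω, max (b - Z ω) 0 ∂μ + c := by
        rw [integral_add hint (integrable_const c), integral_const, probReal_univ, one_smul]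

noncomputable def cvar (μ : Measure Ω) (Z : Ω → ℝ) (τ : ℝ) : ℝ :=
  sSup ((fun b => b - τ⁻¹ * ∫ ω, max (b - Z ω) 0 ∂μ) '' Icc 0 1)

lemma bddAbove_cvar_image (μ : Measure Ω) (Z : Ω → ℝ) {τ : ℝ} (hτ : 0 ≤ τ) :
    BddAbove ((fun b => b - τ⁻¹ * ∫ ω, max (b - Z ω) 0 ∂μ) '' Icc 0 1) := by
  refine ⟨1, forall_mem_image.2 fun b hb => ?_⟩
  have : 0 ≤ τ⁻¹ * ∫ ω, max (b - Z ω) 0 ∂μ :=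
    mul_nonneg (inv_nonneg.2 hτ) (integral_nonneg fun ω => le_max_right _ _)
  linarith [hb.2]

lemma cvar_le_cvar_add {X Y : Ω → ℝ} {τ d : ℝ} (hτ : 0 ≤ τ)
    (h : ∀ b ∈ Icc (0 : ℝ) 1, ∫ ω, max (b - X ω) 0 ∂μ ≤ ∫ ω, max (b - Y ω) 0 ∂μ + d) :
    cvar μ Y τ ≤ cvar μ X τ + τ⁻¹ * d := by
  refine csSup_image_le_csSup_image_add (nonempty_Icc.2 zero_le_one) (bddAbove_cvar_image μ X hτ)
    fun b hb => ?_
  have := mul_le_mul_of_nonneg_left (h b hb) (inv_nonneg.2 hτ)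
  rw [mul_add] at this
  linarith

end

/-- If `F_Y(t) ≤ F_X(t) ≤ F_Y(t + c)` for all `t` (for `[0,1]`-valued `X, Y` and `c ≥ 0`), then
`0 ≤ E[(b − X)⁺] − E[(b − Y)⁺] ≤ c` for every `b ∈ [0,1]`, and
`0 ≤ CVaR_τ(Y) − CVaR_τ(X) ≤ τ⁻¹ c`. -/
theorem cdf_sandwich_cvar {Ω : Type*} [MeasurableSpace Ω]
    (μ : Measure Ω) [IsProbabilityMeasure μ]
    (X Y : Ω → ℝ) (hXmeas : Measurable X) (hYmeas : Measurable Y)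
    (hX01 : ∀ ω, X ω ∈ Set.Icc (0:ℝ) 1) (hY01 : ∀ ω, Y ω ∈ Set.Icc (0:ℝ) 1)
    (c τ : ℝ) (hc : 0 ≤ c) (hτ : τ ∈ Set.Ioc (0:ℝ) 1)
    (hsandwich : ∀ t : ℝ, (μ {ω | Y ω ≤ t}).toReal ≤ (μ {ω | X ω ≤ t}).toReal ∧
      (μ {ω | X ω ≤ t}).toReal ≤ (μ {ω | Y ω ≤ t + c}).toReal) :
    (∀ b ∈ Set.Icc (0:ℝ) 1,
      0 ≤ (∫ ω, max (b - X ω) 0 ∂μ) - ∫ ω, max (b - Y ω) 0 ∂μ ∧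
      (∫ ω, max (b - X ω) 0 ∂μ) - (∫ ω, max (b - Y ω) 0 ∂μ) ≤ c) ∧
    0 ≤ sSup ((fun b => b - τ⁻¹ * ∫ ω, max (b - Y ω) 0 ∂μ) '' Set.Icc (0:ℝ) 1)
        - sSup ((fun b => b - τ⁻¹ * ∫ ω, max (b - X ω) 0 ∂μ) '' Set.Icc (0:ℝ) 1) ∧
    sSup ((fun b => b - τ⁻¹ * ∫ ω, max (b - Y ω) 0 ∂μ) '' Set.Icc (0:ℝ) 1)
        - sSup ((fun b => b - τ⁻¹ * ∫ ω, max (b - X ω) 0 ∂μ) '' Set.Icc (0:ℝ) 1) ≤ τ⁻¹ * c := by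
  have hX0 : ∀ ω, 0 ≤ X ω := fun ω => (hX01 ω).1
  have hY0 : ∀ ω, 0 ≤ Y ω := fun ω => (hY01 ω).1
  have hYX (b : ℝ) : ∫ ω, max (b - Y ω) 0 ∂μ ≤ ∫ ω, max (b - X ω) 0 ∂μ := by
    simpa using integral_max_sub_le_of_cdf_le_add hYmeas hXmeas hY0 hX0 (c := 0)
      (fun t => by rw [add_zero]; exact (hsandwich t).1) b
  have hXY (b : ℝ) : ∫ ω, max (b - X ω) 0 ∂μ ≤ ∫ ω, max (b - Y ω) 0 ∂μ + c :=
    (integral_max_sub_le_of_cdf_le_add hXmeas hYmeas hX0 hY0 (fun t => (hsandwich t).2) b).trans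
      (integral_max_add_sub_le hYmeas hY0 b hc)
  have hcvarXY : cvar μ X τ ≤ cvar μ Y τ := by
    simpa using cvar_le_cvar_add (d := 0) hτ.1.le fun b _ => by simpa using hYX b
  have hcvarYX : cvar μ Y τ ≤ cvar μ X τ + τ⁻¹ * c := cvar_le_cvar_add hτ.1.le fun b _ => hXY b
  exact ⟨fun b _ => ⟨sub_nonneg.2 (hYX b), sub_le_iff_le_add'.2 (hXY b)⟩,
    sub_nonneg.2 hcvarXY, sub_le_iff_le_add'.2 hcvarYX⟩
end

section
/- (Minimax lower bound for Bernoulli median estimation) Let m(p) = 1 if p > 1/2 and m(p) = 0 otherwise, which is the median of the Bernoulli distribution Ber(p). For every n ∈ ℕ and every function f : {0,1}ⁿ → [0,1] (a randomized estimator that, given the data, outputs 1 with probability f of the data), sup_{p ∈ [0,1]} E[(m̂ − m(p))²] ≥ 1/2, where the expectation is over Y₁, …, Y_n drawn i.i.d. from Ber(p) and m̂ drawn from Ber(f(Y₁,…,Y_n)). -/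
/-- Minimax lower bound for Bernoulli median estimation: let `m(p) = 𝟙[p > 1/2]` be the median
of `Ber(p)`. For every `n` and every randomized estimator `f : {0,1}ⁿ → [0,1]` (outputting
`m̂ = 1` with probability `f(Y₁,…,Y_n)`), the worst-case mean squared error satisfies
`sup_{p ∈ [0,1]} E[(m̂ − m(p))²] ≥ 1/2`, where the expectation over
`Y₁,…,Y_n ~ᵢᵢd Ber(p)` and `m̂ ~ Ber(f(Y))` is written out explicitly as a finite sum. -/
theorem bernoulli_median_minimax_lower_bound (n : ℕ)
    (f : (Fin n → Bool) → ℝ) (hf : ∀ y, f y ∈ Set.Icc (0:ℝ) 1) :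
    (1/2 : ℝ) ≤ sSup ((fun p : ℝ =>
        ∑ y : Fin n → Bool,
          (∏ i : Fin n, if y i then p else 1 - p) *
            (f y * (1 - (if p > 1/2 then (1:ℝ) else 0))^2
              + (1 - f y) * (0 - (if p > 1/2 then (1:ℝ) else 0))^2)) '' Set.Icc (0:ℝ) 1) := by
  set F : ℝ → ℝ := fun p =>
      ∑ y : Fin n → Bool,
        (∏ i : Fin n, if y i then p else 1 - p) *
          (f y * (1 - (if p > 1/2 then (1:ℝ) else 0))^2
            + (1 - f y) * (0 - (if p > 1/2 then (1:ℝ) else 0))^2) with hFdef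
  set A : ℝ := ∑ y : Fin n → Bool, (1/2:ℝ)^n * f y with hA
  have hsum1 : ∑ _y : Fin n → Bool, (1/2:ℝ)^n = 1 := by
    rw [Finset.sum_const, Finset.card_univ, Fintype.card_fun]
    simp [nsmul_eq_mul, ← mul_pow]
  have hprod_mem : ∀ (p : ℝ), p ∈ Set.Icc (0:ℝ) 1 → ∀ y : Fin n → Bool,
      (∏ i : Fin n, if y i then p else 1 - p) ∈ Set.Icc (0:ℝ) 1 := by
    intro p hp y
    constructor
    · apply Finset.prod_nonneg
      intro i _
      by_cases h : y i <;> simp [h] <;> linarith [hp.1, hp.2]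
    · apply Finset.prod_le_one
      · intro i _
        by_cases h : y i <;> simp [h] <;> linarith [hp.1, hp.2]
      · intro i _
        by_cases h : y i <;> simp [h] <;> linarith [hp.1, hp.2]
  have hbdd : BddAbove (F '' Set.Icc (0:ℝ) 1) := by
    refine ⟨(2:ℝ)^n, ?_⟩
    rintro _ ⟨p, hp, rfl⟩
    have : F p ≤ ∑ _y : Fin n → Bool, (1:ℝ) := by
      apply Finset.sum_le_sum
      intro y _
      have h1 := hprod_mem p hp y
      have h2 := hf y
      have hb : f y * (1 - (if p > 1/2 then (1:ℝ) else 0))^2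
            + (1 - f y) * (0 - (if p > 1/2 then (1:ℝ) else 0))^2 ∈ Set.Icc (0:ℝ) 1 := by
        by_cases h : p > 1/2
        · simp only [if_pos h]; constructor <;> nlinarith [h2.1, h2.2]
        · simp only [if_neg h]; constructor <;> nlinarith [h2.1, h2.2]
      nlinarith [h1.1, h1.2, hb.1, hb.2]
    calc F p ≤ ∑ _y : Fin n → Bool, (1:ℝ) := this
      _ ≤ (2:ℝ)^n := by
          rw [Finset.sum_const, Finset.card_univ, Fintype.card_fun]
          simp
  -- value at 1/2
  have hF12 : F (1/2) = A := by
    rw [hFdef, hA]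
    apply Finset.sum_congr rfl
    intro y _
    have : ¬ ((1/2:ℝ) > 1/2) := lt_irrefl _
    rw [if_neg this]
    have hp : (∏ _i : Fin n, (1/2:ℝ)) = (1/2:ℝ)^n := by simp
    have : (∏ i : Fin n, if y i then (1/2:ℝ) else 1 - 1/2) = (1/2:ℝ)^n := by
      rw [← hp]; apply Finset.prod_congr rfl; intro i _; by_cases h : y i <;> simp [h] <;> norm_num
    rw [this]; ring
  have hAle : A ≤ sSup (F '' Set.Icc (0:ℝ) 1) := by
    rw [← hF12]
    exact le_csSup hbdd ⟨1/2, by norm_num, rfl⟩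
  -- continuous surrogate g
  set g : ℝ → ℝ := fun p => ∑ y : Fin n → Bool,
      (∏ i : Fin n, if y i then p else 1 - p) * (1 - f y) with hg
  have hgc : Continuous g := by
    apply continuous_finset_sum
    intro y _
    apply Continuous.mul _ continuous_const
    apply continuous_finset_prod
    intro i _
    by_cases h : y i <;> simp [h] <;> fun_prop
  have hg12 : g (1/2) = 1 - A := by
    rw [hg, hA]
    have : ∀ y : Fin n → Bool,
        (∏ i : Fin n, if y i then (1/2:ℝ) else 1 - 1/2) * (1 - f y)
        = (1/2:ℝ)^n - (1/2:ℝ)^n * f y := by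
      intro y
      have : (∏ i : Fin n, if y i then (1/2:ℝ) else 1 - 1/2) = (1/2:ℝ)^n := by
        rw [show ((1/2:ℝ)^n) = ∏ _i : Fin n, (1/2:ℝ) by simp]
        apply Finset.prod_congr rfl; intro i _; by_cases h : y i <;> simp [h] <;> norm_num
      rw [this]; ring
    simp only [this, Finset.sum_sub_distrib, hsum1]
  have hkey : ∀ p ∈ Set.Ioc (1/2:ℝ) 1, g p ≤ sSup (F '' Set.Icc (0:ℝ) 1) := by
    intro p hp
    have hFg : F p = g p := by
      rw [hFdef, hg]
      apply Finset.sum_congr rfl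
      intro y _
      rw [if_pos hp.1]
      ring
    rw [← hFg]
    exact le_csSup hbdd ⟨p, ⟨by linarith [hp.1], hp.2⟩, rfl⟩
  have hne : (nhdsWithin (1/2:ℝ) (Set.Ioc (1/2:ℝ) 1)).NeBot := by
    rw [← mem_closure_iff_nhdsWithin_neBot, closure_Ioc (by norm_num : (1/2:ℝ) ≠ 1)]
    constructor <;> norm_num
  have htend : Filter.Tendsto g (nhdsWithin (1/2:ℝ) (Set.Ioc (1/2:ℝ) 1)) (nhds (g (1/2))) :=
    (hgc.continuousAt).continuousWithinAt
  have h2 : 1 - A ≤ sSup (F '' Set.Icc (0:ℝ) 1) := by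
    rw [← hg12]
    exact le_of_tendsto htend (eventually_nhdsWithin_of_forall hkey)
  by_cases hAc : (1/2:ℝ) ≤ A
  · linarith
  · linarith
end

section
/- Let τ ∈ (0,1], let X be a random variable with values in [0,1] that has a continuous distribution (its CDF F is continuous), and let b* = F†(τ) be its τ-th quantile, so that P(X ≤ b*) = τ. Then for every b̂ ∈ [0,1], Var((b̂ − X)⁺) ≤ 2τ + 2(b̂ − b*)². -/
/-!
Bound the variance by the second moment and split according to whether `X ≤ b*`. On
`{X ≤ b*}` the value `(b̂ - X)⁺` lies in `[0, 1]`; on `{X > b*}` it is at most `|b̂ - b*|`.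
Hence `(b̂ - X)⁺² ≤ 𝟙{X ≤ b*} + (b̂ - b*)²`, whose expectation is `τ + (b̂ - b*)²`.
-/

open MeasureTheory

lemma max_sub_zero_sq_le_indicator_add_sq {x b : ℝ} (hx : 0 ≤ x) (hb : b ≤ 1) (c : ℝ) :
    max (b - x) 0 ^ 2 ≤ (Set.Iic c).indicator 1 x + (b - c) ^ 2 := by
  by_cases hxc : x ≤ c
  · have hle : max (b - x) 0 ≤ 1 := max_le (by linarith) zero_le_one
    rw [Set.indicator_of_mem (Set.mem_Iic.mpr hxc), Pi.one_apply]
    nlinarith [le_max_right (b - x) 0, sq_nonneg (b - c)]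
  · have hle : max (b - x) 0 ≤ |b - c| :=
      max_le (by linarith [le_abs_self (b - c), not_le.mp hxc]) (abs_nonneg _)
    rw [Set.indicator_of_notMem (by simpa using hxc), zero_add, ← sq_abs (b - c)]
    exact pow_le_pow_left₀ (le_max_right _ _) hle 2

open ProbabilityTheory in
lemma variance_max_sub_zero_le {Ω : Type*} [MeasurableSpace Ω] (μ : Measure Ω)
    [IsProbabilityMeasure μ] {X : Ω → ℝ} (hXmeas : Measurable X)
    (hX : ∀ᵐ ω ∂μ, 0 ≤ X ω)
    {b : ℝ} (hb : b ≤ 1) (c : ℝ) :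
    variance (fun ω => max (b - X ω) 0) μ ≤ μ.real {ω | X ω ≤ c} + (b - c) ^ 2 := by
  have hs : MeasurableSet {ω | X ω ≤ c} := measurableSet_le hXmeas measurable_const
  have hcomp :
      (fun ω => (Set.Iic c).indicator (1 : ℝ → ℝ) (X ω)) = {ω | X ω ≤ c}.indicator 1 := by
    ext ω; simp [Set.indicator_apply]
  have hind : Integrable (fun ω => (Set.Iic c).indicator (1 : ℝ → ℝ) (X ω)) μ :=
    hcomp ▸ (integrable_const (1 : ℝ)).indicator hs
  calc variance (fun ω => max (b - X ω) 0) μ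
      ≤ ∫ ω, max (b - X ω) 0 ^ 2 ∂μ :=
        variance_le_expectation_sq
          ((measurable_const.sub hXmeas).max measurable_const).aestronglyMeasurable
    _ ≤ ∫ ω, ((Set.Iic c).indicator 1 (X ω) + (b - c) ^ 2) ∂μ :=
        integral_mono_of_nonneg (.of_forall fun _ => sq_nonneg _) (hind.add (integrable_const _))
          (hX.mono fun _ hx => max_sub_zero_sq_le_indicator_add_sq hx hb c)
    _ = μ.real {ω | X ω ≤ c} + (b - c) ^ 2 := by
        rw [integral_add hind (integrable_const _), integral_const, probReal_univ, one_smul,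
          hcomp, integral_indicator_one hs]

theorem variance_relu_quantile_bound_general {Ω : Type*} [MeasurableSpace Ω]
    (μ : Measure Ω) [IsProbabilityMeasure μ]
    (τ : ℝ)
    (X : Ω → ℝ) (hXmeas : Measurable X) (hX01 : ∀ ω, X ω ∈ Set.Icc (0:ℝ) 1)
    (F : ℝ → ℝ) (hF : ∀ x, F x = (μ {ω | X ω ≤ x}).toReal)
    (bstar : ℝ)
    (hquant : F bstar = τ) :
    ∀ bhat ∈ Set.Icc (0:ℝ) 1,
      ProbabilityTheory.variance (fun ω => max (bhat - X ω) 0) μ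
        ≤ 2 * τ + 2 * (bhat - bstar)^2 := by
  intro bhat hbhat
  have hτ : μ.real {ω | X ω ≤ bstar} = τ := by rw [← hquant, hF]; rfl
  have hτ_nonneg : 0 ≤ τ := hτ ▸ measureReal_nonneg
  have hvar := variance_max_sub_zero_le μ hXmeas (.of_forall fun ω => (hX01 ω).1) hbhat.2 bstar
  rw [hτ] at hvar
  linarith [sq_nonneg (bhat - bstar)]

/-- For a continuously distributed `X` with values in `[0,1]` and τ-th quantile `b* = F†(τ)`
(so that `P(X ≤ b*) = τ`), for every `b̂ ∈ [0,1]`,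
`Var((b̂ − X)⁺) ≤ 2τ + 2(b̂ − b*)²`. -/
theorem variance_relu_quantile_bound {Ω : Type*} [MeasurableSpace Ω]
    (μ : Measure Ω) [IsProbabilityMeasure μ]
    (τ : ℝ) (hτ : τ ∈ Set.Ioc (0:ℝ) 1)
    (X : Ω → ℝ) (hXmeas : Measurable X) (hX01 : ∀ ω, X ω ∈ Set.Icc (0:ℝ) 1)
    (F : ℝ → ℝ) (hF : ∀ x, F x = (μ {ω | X ω ≤ x}).toReal) (hFcont : Continuous F)
    (bstar : ℝ) (hbstar : bstar = sInf {x ∈ Set.Icc (0:ℝ) 1 | τ ≤ F x})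
    (hquant : F bstar = τ) :
    ∀ bhat ∈ Set.Icc (0:ℝ) 1,
      ProbabilityTheory.variance (fun ω => max (bhat - X ω) 0) μ
        ≤ 2 * τ + 2 * (bhat - bstar)^2 :=
  variance_relu_quantile_bound_general μ τ X hXmeas hX01 F hF bstar hquant
end
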